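/- arXiv:2012.02480 — 6 statements merged into one kernel-verified Lean document; each statement's English description precedes it below -/
import Mathlib

section
/- For every nonnegative integer ν, the integral ∫₀^π ((sin t / t) · exp(t · cot t))^ν dt equals π ν^ν / Γ(1+ν) = π ν^ν / ν! (with the integrand interpreted by continuity at t = 0, where it equals e^ν, and at t = π, where it equals 0 for ν ≥ 1). -/
/-!
Put `z(t) = t cot t + i t = (t / sin t) e^{it}` for `0 < t < π`. Then
`e^z / z = (sin t / t) e^{t cot t}`, so the integrand is the real number `e^{νz} / z^ν`, and since
`Im z' = 1` it is the derivative of `Im Φ(z(t))` for any primitive `Φ` of `e^{νw} / w^ν` on the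
slit plane. Writing `ν = n + 1` and scaling `w ↦ νw`, it suffices to have a primitive `Φₙ` of
`e^w / w^(n+1)`. Integration by parts reduces this to `n = 0`, where
`Φ₀ w = log w + ∫₀^w (e^u - 1) / u du` with an entire second term. Now `Φₙ` is real on the
positive axis, which `ν z(t)` approaches as `t → 0`, while `Im Φₙ w = arg w / n! + o(1)` as
`Re w → -∞` in a horizontal strip, and `arg (ν z(t)) = t → π` as `t → π`. Hence the integral
is `ν^n π / n! = π ν^ν / ν!`.
-/

open Real Filter Topology Set Nat

namespace intervalIntegral

theorem integral_eq_sub_of_hasDerivAt_of_tendsto_of_nonneg {f f' : ℝ → ℝ} {a b fa fb : ℝ}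
    (hab : a < b) (hderiv : ∀ x ∈ Ioo a b, HasDerivAt f (f' x) x)
    (hpos : ∀ x ∈ Ioo a b, 0 ≤ f' x) (ha : Tendsto f (𝓝[>] a) (𝓝 fa))
    (hb : Tendsto f (𝓝[<] b) (𝓝 fb)) :
    ∫ x in a..b, f' x = fb - fa := by
  refine integral_eq_sub_of_hasDerivAt_of_tendsto hab hderiv ?_ ha hb
  set F : ℝ → ℝ := Function.update (Function.update f a fa) b fb
  have hFf : ∀ x ∈ Ioo a b, F x = f x := fun x hx => by
    simp [F, Function.update_of_ne hx.2.ne, Function.update_of_ne hx.1.ne']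
  have hF : ∀ x ∈ Ioo a b, HasDerivAt F (f' x) x := fun x hx =>
    (hderiv x hx).congr_of_eventuallyEq <|
      Filter.eventuallyEq_of_mem (Ioo_mem_nhds hx.1 hx.2) hFf
  have hcont : ContinuousOn F (Icc a b) := by
    rw [continuousOn_update_iff, continuousOn_update_iff, Icc_sdiff_right, Ico_sdiff_left]
    refine ⟨⟨fun z hz => (hderiv z hz).continuousAt.continuousWithinAt, ?_⟩, ?_⟩
    · exact fun _ => ha.mono_left (nhdsWithin_mono _ Ioo_subset_Ioi_self)
    · rintro -
      refine (hb.congr' ?_).mono_left (nhdsWithin_mono _ Ico_subset_Iio_self)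
      filter_upwards [Ioo_mem_nhdsLT hab] with _ hz using
        (Function.update_of_ne hz.1.ne' _ _).symm
  exact (intervalIntegrable_iff_integrableOn_Ioc_of_le hab.le).2
    (integrableOn_deriv_of_nonneg hcont hF hpos)

end intervalIntegral

namespace Complex

theorem hasDerivAt_wedgeIntegral_of_differentiable {E : Type*} [NormedAddCommGroup E]
    [NormedSpace ℂ E] [CompleteSpace E] {f : ℂ → E} (hf : Differentiable ℂ f) (c z : ℂ) :
    HasDerivAt (fun w => wedgeIntegral c w f) (f z) z :=
  (hf.differentiableOn.isConservativeOn.mono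
    (subset_univ (Metric.ball c (‖z - c‖ + 1)))).hasDerivAt_wedgeIntegral
    hf.continuous.continuousOn (by simp [dist_eq_norm])

theorem dslope_exp_zero_of_ne {w : ℂ} (hw : w ≠ 0) : dslope exp 0 w = (exp w - 1) / w := by
  rw [dslope_of_ne _ hw, slope_def_field, exp_zero, sub_zero]

theorem differentiable_dslope_exp_zero : Differentiable ℂ (dslope exp 0) :=
  differentiableOn_univ.1 <|
    (differentiableOn_dslope univ_mem).2 differentiable_exp.differentiableOn

theorem im_dslope_exp_zero_ofReal (x : ℝ) : (dslope exp 0 (x : ℂ)).im = 0 := by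
  rcases eq_or_ne x 0 with rfl | hx
  · simp
  · rw [dslope_exp_zero_of_ne (ofReal_ne_zero.2 hx), ← ofReal_exp, ← ofReal_one,
      ← ofReal_sub, ← ofReal_div, ofReal_im]

theorem norm_dslope_exp_zero_le {w : ℂ} (hw : w.re ≤ 0) (hw0 : w ≠ 0) :
    ‖dslope exp 0 w‖ ≤ 2 / ‖w‖ := by
  rw [dslope_exp_zero_of_ne hw0, norm_div]
  gcongr
  calc ‖exp w - 1‖ ≤ ‖exp w‖ + ‖(1 : ℂ)‖ := norm_sub_le _ _
    _ ≤ 1 + 1 := by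
      rw [norm_exp, norm_one]
      gcongr
      exact Real.exp_le_one_iff.2 hw
    _ = 2 := by norm_num

theorem im_wedgeIntegral_zero_of_im_eq_zero {f : ℂ → ℂ} (hf : ∀ x : ℝ, (f x).im = 0)
    (w : ℂ) :
    (wedgeIntegral 0 w f).im = (∫ y in (0 : ℝ)..w.im, f (w.re + y * I)).re := by
  have hreal : ∀ x : ℝ, f (x + ((0 : ℝ) : ℂ) * I) = ((f x).re : ℂ) := fun x => by
    apply Complex.ext <;> simp [hf]
  simp only [wedgeIntegral, zero_re, zero_im, hreal, intervalIntegral.integral_ofReal,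
    smul_eq_mul, add_im, ofReal_im, I_mul_im, zero_add]

theorem abs_im_wedgeIntegral_dslope_exp_le {w : ℂ} (hw : w.re < 0) :
    |(wedgeIntegral 0 w (dslope exp 0)).im| ≤ 2 / -w.re * |w.im| := by
  rw [im_wedgeIntegral_zero_of_im_eq_zero im_dslope_exp_zero_ofReal]
  refine (abs_re_le_norm _).trans ?_
  have := intervalIntegral.norm_integral_le_of_norm_le_const
    (f := fun y : ℝ => dslope exp 0 (w.re + y * I)) (a := 0) (b := w.im) (C := 2 / -w.re)
    fun y _ => ?_
  · simpa using this
  have hre : -w.re ≤ ‖(w.re + y * I : ℂ)‖ := by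
    have := abs_re_le_norm (w.re + y * I : ℂ)
    simp only [add_re, ofReal_re, mul_re, ofReal_im, I_re, I_im, mul_zero, zero_mul, sub_zero,
      add_zero] at this
    linarith [neg_le_abs w.re]
  calc ‖dslope exp 0 (w.re + y * I)‖ ≤ 2 / ‖(w.re + y * I : ℂ)‖ :=
        norm_dslope_exp_zero_le (by simpa using hw.le)
          (fun h => hw.ne (by simpa using congrArg re h))
    _ ≤ 2 / -w.re := by gcongr; linarith


/-- The recursion is integration by parts: `(exp w / w ^ (n + 1))' = exp w / w ^ (n + 1) -
(n + 1) * exp w / w ^ (n + 2)`. -/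
noncomputable def expDivPowPrimitive : ℕ → ℂ → ℂ
  | 0, w => log w + wedgeIntegral 0 w (dslope exp 0)
  | n + 1, w => (expDivPowPrimitive n w - exp w / w ^ (n + 1)) / (n + 1)

theorem hasDerivAt_expDivPowPrimitive (n : ℕ) {w : ℂ} (hw : w ∈ slitPlane) :
    HasDerivAt (expDivPowPrimitive n) (exp w / w ^ (n + 1)) w := by
  have hw0 : w ≠ 0 := slitPlane_ne_zero hw
  induction n with
  | zero =>
    refine ((hasDerivAt_log hw).add (hasDerivAt_wedgeIntegral_of_differentiable
      differentiable_dslope_exp_zero 0 w)).congr_deriv ?_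
    rw [dslope_exp_zero_of_ne hw0]
    field_simp
    ring
  | succ n ih =>
    have hq := (hasDerivAt_exp w).div (hasDerivAt_pow (n + 1) w) (pow_ne_zero _ hw0)
    refine ((ih.sub hq).div_const ((n : ℂ) + 1)).congr_deriv ?_
    rw [Nat.add_sub_cancel]
    field_simp
    push_cast
    ring

theorem im_expDivPowPrimitive_ofReal (n : ℕ) {x : ℝ} (hx : 0 < x) :
    (expDivPowPrimitive n x).im = 0 := by
  induction n with
  | zero =>
    rw [expDivPowPrimitive, add_im, im_wedgeIntegral_zero_of_im_eq_zero im_dslope_exp_zero_ofReal,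
      ← ofReal_log hx.le, ofReal_im, ofReal_im, intervalIntegral.integral_same, zero_re, add_zero]
  | succ n ih =>
    rw [expDivPowPrimitive, ← ofReal_exp, ← ofReal_pow, ← ofReal_div,
      show (n : ℂ) + 1 = ((n + 1 : ℝ) : ℂ) by push_cast; rfl, div_ofReal_im, sub_im, ih,
      ofReal_im, sub_zero, zero_div]

theorem tendsto_im_expDivPowPrimitive_sub_arg (n : ℕ) (C : ℝ) :
    Tendsto (fun w => (expDivPowPrimitive n w).im - arg w / n !)
      (comap re atBot ⊓ 𝓟 {w | |w.im| ≤ C}) (𝓝 0) := by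
  set l := comap re atBot ⊓ 𝓟 {w : ℂ | |w.im| ≤ C}
  have hre : Tendsto re l atBot := tendsto_comap.mono_left inf_le_left
  have him : ∀ᶠ w in l, |w.im| ≤ C := mem_inf_of_right (mem_principal_self _)
  induction n with
  | zero =>
    have hbound : Tendsto (fun w : ℂ => 2 / -w.re * C) l (𝓝 0) := by
      simpa using (tendsto_const_nhds.div_atTop (tendsto_neg_atBot_atTop.comp hre)).mul_const C
    refine squeeze_zero_norm' ?_ hbound
    filter_upwards [him, hre.eventually_lt_atBot 0] with w hwC hw
    rw [expDivPowPrimitive, add_im, log_im, Nat.factorial_zero, Nat.cast_one, div_one,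
      add_sub_cancel_left, Real.norm_eq_abs]
    exact (abs_im_wedgeIntegral_dslope_exp_le hw).trans
      (mul_le_mul_of_nonneg_left hwC (div_nonneg zero_le_two (neg_nonneg.2 hw.le)))
  | succ n ih =>
    have hexp : Tendsto (fun w => (exp w / w ^ (n + 1)).im) l (𝓝 0) := by
      refine squeeze_zero_norm' ?_ (Real.tendsto_exp_atBot.comp hre)
      filter_upwards [hre.eventually_le_atBot (-1)] with w hw
      have h1 : 1 ≤ ‖w‖ := by linarith [neg_abs_le w.re, abs_re_le_norm w]
      calc ‖(exp w / w ^ (n + 1)).im‖ ≤ ‖exp w / w ^ (n + 1)‖ := abs_im_le_norm _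
        _ = Real.exp w.re / ‖w‖ ^ (n + 1) := by rw [norm_div, norm_exp, norm_pow]
        _ ≤ Real.exp w.re := div_le_self (Real.exp_pos _).le (one_le_pow₀ h1)
    have := (ih.sub hexp).div_const ((n : ℝ) + 1)
    rw [zero_sub, neg_zero, zero_div] at this
    refine this.congr fun w => ?_
    rw [expDivPowPrimitive, show (n : ℂ) + 1 = ((n + 1 : ℕ) : ℂ) by push_cast; rfl,
      div_natCast_im, sub_im, Nat.factorial_succ, Nat.cast_mul]
    push_cast
    field_simp
    ring

end Complex

namespace NuttallBouwkamp

noncomputable def curve (t : ℝ) : ℂ := ↑(t * cot t) + ↑t * Complex.I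

theorem curve_re (t : ℝ) : (curve t).re = t * cot t := by
  simp only [curve, Complex.add_re, Complex.ofReal_re, Complex.mul_re, Complex.ofReal_im,
    Complex.I_re, Complex.I_im]
  ring

theorem curve_im (t : ℝ) : (curve t).im = t := by
  simp only [curve, Complex.add_im, Complex.ofReal_re, Complex.mul_im, Complex.ofReal_im,
    Complex.I_re, Complex.I_im]
  ring

theorem curve_eq {t : ℝ} (ht : sin t ≠ 0) :
    curve t = ↑(t / sin t) * (Complex.cos t + Complex.sin t * Complex.I) := by
  have hs : Complex.sin t ≠ 0 := by rw [← Complex.ofReal_sin]; exact_mod_cast ht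
  rw [curve, cot_eq_cos_div_sin, ← Complex.ofReal_cos, ← Complex.ofReal_sin]
  push_cast
  field_simp

theorem arg_natCast_mul_curve {ν : ℕ} (hν : ν ≠ 0) {t : ℝ} (ht : t ∈ Ioo 0 π) :
    Complex.arg (ν * curve t) = t := by
  have hsin := sin_pos_of_pos_of_lt_pi ht.1 ht.2
  rw [curve_eq hsin.ne', ← mul_assoc, ← Complex.ofReal_natCast, ← Complex.ofReal_mul,
    Complex.arg_mul_cos_add_sin_mul_I
      (mul_pos (Nat.cast_pos.2 (Nat.pos_of_ne_zero hν)) (div_pos ht.1 hsin))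
      ⟨by linarith [ht.1, pi_pos], ht.2.le⟩]

theorem exp_natCast_mul_curve_div_pow (ν : ℕ) {t : ℝ} (ht : sin t ≠ 0) :
    Complex.exp (ν * curve t) / curve t ^ ν = ↑((sin t / t * exp (t * cot t)) ^ ν) := by
  rw [Complex.exp_nat_mul, ← div_pow, Complex.ofReal_pow]
  congr 1
  have hexp : Complex.exp (curve t) = ↑(exp (t * cot t)) * Complex.exp (t * Complex.I) := by
    rw [curve, Complex.exp_add, Complex.ofReal_exp]
  rw [hexp, curve_eq ht, ← Complex.exp_mul_I, mul_div_mul_right _ _ (Complex.exp_ne_zero _),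
    ← Complex.ofReal_div, div_div_eq_mul_div]
  ring_nf

theorem hasDerivAt_curve {t : ℝ} (ht : sin t ≠ 0) :
    HasDerivAt curve (↑(deriv (fun s => s * cot s) t) + Complex.I) t := by
  have hd : DifferentiableAt ℝ (fun s => s * cot s) t := by
    simp only [cot_eq_cos_div_sin]
    fun_prop (disch := exact ht)
  exact hd.hasDerivAt.ofReal_comp.add
    (by simpa using (hasDerivAt_id t).ofReal_comp.mul_const Complex.I)

theorem tendsto_mul_cot_nhdsGT_zero : Tendsto (fun t => t * cot t) (𝓝[>] 0) (𝓝 1) := by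
  have h : Tendsto (fun t => cos t / sinc t) (𝓝 0) (𝓝 (cos 0 / sinc 0)) :=
    (continuous_cos.continuousAt.div continuous_sinc.continuousAt (by simp [sinc_zero])).tendsto
  rw [cos_zero, sinc_zero, div_one] at h
  refine (h.mono_left nhdsWithin_le_nhds).congr' ?_
  filter_upwards [self_mem_nhdsWithin] with t (ht : 0 < t)
  rw [sinc_of_ne_zero ht.ne', cot_eq_cos_div_sin]
  field_simp

theorem tendsto_mul_cot_nhdsLT_pi : Tendsto (fun t => t * cot t) (𝓝[<] π) atBot := by
  have hsin : Tendsto sin (𝓝[<] π) (𝓝[>] 0) := by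
    refine tendsto_nhdsWithin_iff.2 ⟨?_, ?_⟩
    · simpa using (continuous_sin.tendsto π).mono_left nhdsWithin_le_nhds
    · filter_upwards [Ioo_mem_nhdsLT pi_pos] with t ht using sin_pos_of_pos_of_lt_pi ht.1 ht.2
  have hcos : Tendsto (fun t => t * cos t) (𝓝[<] π) (𝓝 (-π)) := by
    have : Continuous fun t => t * cos t := by fun_prop
    simpa using (this.tendsto π).mono_left nhdsWithin_le_nhds
  refine (hcos.neg_mul_atTop (neg_lt_zero.2 pi_pos) (tendsto_inv_nhdsGT_zero.comp hsin)).congr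
    fun t => ?_
  simp [cot_eq_cos_div_sin, div_eq_mul_inv, mul_assoc]

theorem hasDerivAt_im_expDivPowPrimitive_curve (n : ℕ) {t : ℝ} (ht : t ∈ Ioo 0 π) :
    HasDerivAt (fun t => ((n + 1 : ℕ) : ℝ) ^ n *
        (Complex.expDivPowPrimitive n ((n + 1 : ℕ) * curve t)).im)
      ((sin t / t * exp (t * cot t)) ^ (n + 1)) t := by
  have hsin := (sin_pos_of_pos_of_lt_pi ht.1 ht.2).ne'
  set ν : ℕ := n + 1
  have hν : (ν : ℂ) ≠ 0 := Nat.cast_ne_zero.2 n.succ_ne_zero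
  have hslit : (ν : ℂ) * curve t ∈ Complex.slitPlane := by
    refine Complex.mem_slitPlane_iff.2 (Or.inr ?_)
    rw [Complex.mul_im, Complex.natCast_re, Complex.natCast_im, curve_im, zero_mul, add_zero]
    exact mul_ne_zero (Nat.cast_ne_zero.2 n.succ_ne_zero) ht.1.ne'
  have h := (Complex.hasDerivAt_expDivPowPrimitive n hslit).comp t
    ((hasDerivAt_curve hsin).const_mul (ν : ℂ))
  refine ((Complex.imCLM.hasFDerivAt.comp_hasDerivAt t h).const_mul ((ν : ℝ) ^ n)).congr_deriv ?_
  have hexp := exp_natCast_mul_curve_div_pow ν hsin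
  have hcurve : curve t ≠ 0 := fun h0 => by simp [h0] at hslit
  have key : Complex.exp (ν * curve t) / (ν * curve t) ^ (n + 1) * ν
      = ↑((sin t / t * exp (t * cot t)) ^ ν / (ν : ℝ) ^ n) := by
    rw [Complex.ofReal_div, ← hexp]
    push_cast
    field_simp
    ring
  simp only [Complex.imCLM_apply, ← mul_assoc, key, Complex.mul_im, Complex.ofReal_re,
    Complex.ofReal_im, Complex.add_re, Complex.add_im, Complex.I_re, Complex.I_im]
  have : (ν : ℝ) ≠ 0 := Nat.cast_ne_zero.2 n.succ_ne_zero
  field_simp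
  ring

theorem tendsto_curve_nhdsGT_zero : Tendsto curve (𝓝[>] 0) (𝓝 1) := by
  have h : Tendsto curve (𝓝[>] 0) (𝓝 (((1 : ℝ) : ℂ) + ((0 : ℝ) : ℂ) * Complex.I)) :=
    ((Complex.continuous_ofReal.tendsto 1).comp tendsto_mul_cot_nhdsGT_zero).add
      (((Complex.continuous_ofReal.tendsto 0).comp
        (tendsto_id.mono_left (nhdsWithin_le_nhds (s := Ioi 0)))).mul_const Complex.I)
  simpa using h

theorem tendsto_im_expDivPowPrimitive_curve_nhdsGT_zero (n : ℕ) :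
    Tendsto (fun t => (Complex.expDivPowPrimitive n ((n + 1 : ℕ) * curve t)).im) (𝓝[>] 0)
      (𝓝 0) := by
  have hν : (0 : ℝ) < (n + 1 : ℕ) := Nat.cast_pos.2 n.succ_pos
  have hcont : ContinuousAt (Complex.expDivPowPrimitive n) ((n + 1 : ℕ) : ℝ) :=
    (Complex.hasDerivAt_expDivPowPrimitive n (Complex.ofReal_mem_slitPlane.2 hν)).continuousAt
  have hlim : Tendsto (fun t => ((n + 1 : ℕ) : ℂ) * curve t) (𝓝[>] 0)
      (𝓝 (((n + 1 : ℕ) : ℝ) : ℂ)) := by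
    simpa using tendsto_curve_nhdsGT_zero.const_mul ((n + 1 : ℕ) : ℂ)
  have h := (Complex.continuous_im.tendsto _).comp (hcont.tendsto.comp hlim)
  rwa [Complex.im_expDivPowPrimitive_ofReal n hν] at h

theorem tendsto_im_expDivPowPrimitive_curve_nhdsLT_pi (n : ℕ) :
    Tendsto (fun t => (Complex.expDivPowPrimitive n ((n + 1 : ℕ) * curve t)).im) (𝓝[<] π)
      (𝓝 (π / n !)) := by
  set ν : ℕ := n + 1
  have hν : (0 : ℝ) < ν := Nat.cast_pos.2 n.succ_pos
  have hIoo : ∀ᶠ t in 𝓝[<] π, t ∈ Ioo 0 π := Ioo_mem_nhdsLT pi_pos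
  have hstrip : Tendsto (fun t => (ν : ℂ) * curve t) (𝓝[<] π)
      (comap Complex.re atBot ⊓ 𝓟 {w | |w.im| ≤ ν * π}) := by
    refine tendsto_inf.2 ⟨tendsto_comap_iff.2 ?_, tendsto_principal.2 ?_⟩
    · simpa [Function.comp_def, Complex.mul_re, curve_re, curve_im] using
        tendsto_mul_cot_nhdsLT_pi.const_mul_atBot hν
    · filter_upwards [hIoo] with t ht
      simp only [Complex.mul_im, Complex.natCast_re, Complex.natCast_im, curve_im,
        zero_mul, add_zero, abs_mul, Nat.abs_cast, abs_of_pos ht.1]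
      gcongr
      exact ht.2.le
  have harg :
      Tendsto (fun t => Complex.arg (ν * curve t) / n !) (𝓝[<] π) (𝓝 (π / n !)) := by
    refine ((tendsto_id.mono_left nhdsWithin_le_nhds).div_const _).congr' ?_
    filter_upwards [hIoo] with t ht
    rw [arg_natCast_mul_curve n.succ_ne_zero ht, id]
  simpa using ((Complex.tendsto_im_expDivPowPrimitive_sub_arg n _).comp hstrip).add harg

theorem integral_pow_succ (n : ℕ) :
    ∫ t in (0 : ℝ)..π, (sin t / t * exp (t * cot t)) ^ (n + 1) = (n + 1) ^ n * π / n ! := by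
  rw [intervalIntegral.integral_eq_sub_of_hasDerivAt_of_tendsto_of_nonneg pi_pos
    (fun t ht => hasDerivAt_im_expDivPowPrimitive_curve n ht)
    (fun t ht => pow_nonneg (mul_nonneg (div_nonneg
      (sin_nonneg_of_nonneg_of_le_pi ht.1.le ht.2.le) ht.1.le) (exp_pos _).le) _)
    ((tendsto_im_expDivPowPrimitive_curve_nhdsGT_zero n).const_mul _)
    ((tendsto_im_expDivPowPrimitive_curve_nhdsLT_pi n).const_mul _)]
  push_cast
  ring

end NuttallBouwkamp

theorem nuttall_bouwkamp_nat (ν : ℕ) :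
    ∫ t in (0:ℝ)..π, ((Real.sin t / t) * Real.exp (t * Real.cot t)) ^ ν
      = π * (ν : ℝ) ^ ν / Real.Gamma (1 + ν) ∧
    Real.Gamma (1 + ν) = (ν.factorial : ℝ) := by
  have hGamma : Real.Gamma (1 + ν) = ν ! := by
    rw [add_comm, Real.Gamma_nat_eq_factorial]
  refine ⟨?_, hGamma⟩
  rw [hGamma]
  rcases ν with _ | n
  · simp
  · rw [NuttallBouwkamp.integral_pow_succ, Nat.factorial_succ]
    push_cast
    field_simp
    ring
end

section
/- For every real x with |x| < 1/e, the series ∑_{n=1}^∞ ((-n)^{n-1} / n!) x^n converges absolutely. -/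
open Real

/-! The coefficients satisfy `n ^ (n - 1) / n! ≤ n ^ n / n! ≤ e ^ n`, the last step being one term of the
exponential series at `n`, so the series is dominated by the geometric series of ratio `e |x| < 1`. -/

theorem pow_self_div_factorial_le_exp_one_pow (n : ℕ) : (n : ℝ) ^ n / n.factorial ≤ exp 1 ^ n := by
  rw [← exp_nat_mul, mul_one]
  exact pow_div_factorial_le_exp (x := n) n.cast_nonneg n

theorem abs_lambertW_term_le (x : ℝ) (n : ℕ) :
    |(-(n + 1 : ℝ)) ^ n / (n + 1).factorial * x ^ (n + 1)| ≤ (exp 1 * |x|) ^ (n + 1) := by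
  have hcoeff : (n + 1 : ℝ) ^ n / (n + 1).factorial ≤ exp 1 ^ (n + 1) :=
    calc (n + 1 : ℝ) ^ n / (n + 1).factorial
        ≤ (n + 1 : ℝ) ^ (n + 1) / (n + 1).factorial := by
          gcongr
          · exact le_add_of_nonneg_left n.cast_nonneg
          · exact n.le_succ
      _ ≤ exp 1 ^ (n + 1) := by exact_mod_cast pow_self_div_factorial_le_exp_one_pow (n + 1)
  calc |(-(n + 1 : ℝ)) ^ n / (n + 1).factorial * x ^ (n + 1)|
      = (n + 1 : ℝ) ^ n / (n + 1).factorial * |x| ^ (n + 1) := by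
        rw [abs_mul, abs_div, abs_pow, abs_neg, abs_pow, abs_of_pos (by positivity), Nat.abs_cast]
    _ ≤ exp 1 ^ (n + 1) * |x| ^ (n + 1) := by gcongr
    _ = (exp 1 * |x|) ^ (n + 1) := (mul_pow _ _ _).symm

theorem lambertW_series_abs_convergent (x : ℝ) (hx : |x| < 1 / Real.exp 1) :
    Summable (fun n : ℕ => |(-(n + 1 : ℝ)) ^ n / (n + 1).factorial * x ^ (n + 1)|) := by
  have hratio : exp 1 * |x| < 1 := by
    rwa [lt_div_iff₀ (exp_pos 1), mul_comm] at hx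
  have hgeom : Summable fun n : ℕ => (exp 1 * |x|) ^ (n + 1) :=
    (summable_nat_add_iff 1).mpr (summable_geometric_of_lt_one (by positivity) hratio)
  exact hgeom.of_nonneg_of_le (fun _ => abs_nonneg _) (abs_lambertW_term_le x)
end

section
/- For every real x with |x| < 1/e, the sum w = ∑_{n=1}^∞ ((-n)^{n-1} / n!) x^n satisfies w · exp(w) = x. -/
/-!
Write `W x = x * V x` with `V x = ∑ (-(n + 1)) ^ n / (n + 1)! * x ^ n`. Both power series converge,
together with their derivatives, for `|x| < 1 / e`, because `n ^ n / n! ≤ e ^ n`. Abel's identity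
`∑ₖ C(m+1, k+1) (k+1)^k (y-k-1)^(m-k) = (m+1) y^m` yields a recurrence for the coefficients which
says exactly that `V' + V W' = 0`. Hence `V * exp W` has zero derivative on the disc and equals its
value `1` at the origin, so `W * exp W = x * (V * exp W) = x`.
-/

open Finset Real Topology

theorem sum_range_neg_one_pow_mul_choose_succ_mul_pow {R : Type*} [CommRing R] (s : ℕ) :
    ∑ k ∈ range (s + 1), (-1 : R) ^ (s - k) * (s + 1).choose (k + 1) * ((k : R) + 1) ^ s
      = 0 ^ s := by
  have h := congr_fun (fwdDiff_iter_pow_eq_zero_of_lt (R := R) (lt_add_one s)) 0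
  rw [fwdDiff_iter_eq_sum_shift, sum_range_succ'] at h
  simp only [zsmul_eq_mul, nsmul_eq_mul, Int.cast_mul, Int.cast_pow, Int.cast_neg, Int.cast_one,
    Int.cast_natCast, Nat.cast_add, Nat.cast_one, mul_one, zero_add, tsub_zero, Nat.reduceSubDiff,
    Nat.choose_zero_right, Nat.cast_zero, Pi.zero_apply] at h
  have h0 : (-1 : R) ^ (s + 1) * 0 ^ s = -0 ^ s := by cases s <;> simp
  linear_combination h - h0

/-- Abel's identity. Expanding `(y - (k + 1)) ^ (m - k)` binomially and exchanging the sums, the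
inner sums become finite differences of powers, which vanish except for the top term. -/
theorem sum_range_choose_mul_pow_mul_sub_pow {R : Type*} [CommRing R] (m : ℕ) (y : R) :
    ∑ k ∈ range (m + 1),
        ((m + 1).choose (k + 1) : R) * ((k : R) + 1) ^ k * (y - (k + 1)) ^ (m - k)
      = (m + 1) * y ^ m := by
  have hexp : ∀ k ∈ range (m + 1),
      ((m + 1).choose (k + 1) : R) * ((k : R) + 1) ^ k * (y - (k + 1)) ^ (m - k)
      = ∑ l ∈ range (m - k + 1), ((m + 1).choose l : R) * y ^ l *
          ((-1) ^ (m - l - k) * (m - l + 1).choose (k + 1) * ((k : R) + 1) ^ (m - l)) := by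
    intro k hk
    rw [sub_eq_add_neg, add_pow y, mul_sum]
    refine sum_congr rfl fun l hl => ?_
    have hkl : k + l ≤ m := by simp only [mem_range] at hk hl; omega
    have hchoose : ((m + 1).choose (k + 1) : R) * (m - k).choose l
        = (m + 1).choose l * (m - l + 1).choose (k + 1) := by
      rw [← Nat.cast_mul, ← Nat.cast_mul,
        ← Nat.choose_symm_of_eq_add (show m + 1 = (m - k) + (k + 1) by omega),
        Nat.choose_mul (by omega),
        Nat.choose_symm_of_eq_add (show m + 1 - l = (m - k - l) + (k + 1) by omega)]
      congr 3; omega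
    have hpow : ((k : R) + 1) ^ (m - l) = ((k : R) + 1) ^ k * ((k : R) + 1) ^ (m - l - k) := by
      rw [← pow_add]; congr 1; omega
    rw [show m - k - l = m - l - k by omega, hpow, neg_pow]
    linear_combination
      (y ^ l * (-1) ^ (m - l - k) * ((k : R) + 1) ^ k * ((k : R) + 1) ^ (m - l - k)) * hchoose
  rw [sum_congr rfl hexp, sum_comm' (t' := range (m + 1)) (s' := fun l => range (m - l + 1))]
  · simp_rw [← mul_sum, sum_range_neg_one_pow_mul_choose_succ_mul_pow]
    rw [sum_range_succ, sum_eq_zero fun l hl => ?_]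
    · simp [Nat.choose_succ_self_right]
    · simp [show m - l ≠ 0 by simp only [mem_range] at hl; omega]
  · intro k l; simp only [mem_range]; omega

theorem sum_antidiagonal_choose_mul_pow_mul_pow (n : ℕ) :
    ∑ p ∈ antidiagonal n, (n + 2).choose (p.1 + 1) * (p.1 + 1) ^ p.1 * (p.2 + 1) ^ (p.2 + 1)
      = (n + 1) * (n + 2) ^ (n + 1) := by
  have h := sum_range_choose_mul_pow_mul_sub_pow (n + 1) ((n : ℤ) + 2)
  rw [sum_range_succ] at h
  zify
  calc ∑ p ∈ antidiagonal n,
        ((n + 2).choose (p.1 + 1) : ℤ) * ((p.1 : ℤ) + 1) ^ p.1 * ((p.2 : ℤ) + 1) ^ (p.2 + 1)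
      = ∑ k ∈ range (n + 1), ((n + 2).choose (k + 1) : ℤ) * ((k : ℤ) + 1) ^ k
          * ((n : ℤ) + 2 - (k + 1)) ^ (n + 1 - k) := by
        rw [Nat.sum_antidiagonal_eq_sum_range_succ_mk]
        refine sum_congr rfl fun k hk => ?_
        have hk : k ≤ n := Nat.lt_succ_iff.mp (mem_range.mp hk)
        rw [show n - k + 1 = n + 1 - k by omega]
        push_cast [Nat.cast_sub hk]
        ring
    _ = (n + 1) * (n + 2) ^ (n + 1) := by
        simp only [Nat.choose_self, Nat.cast_one, Nat.cast_add, one_mul, tsub_self, pow_zero,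
          mul_one] at h
        linear_combination h

noncomputable def lambertCoeff (n : ℕ) : ℝ := (-(n + 1 : ℝ)) ^ n / (n + 1).factorial

theorem lambertCoeff_recurrence (n : ℕ) :
    (n + 1) * lambertCoeff (n + 1)
      + ∑ p ∈ antidiagonal n, lambertCoeff p.1 * ((p.2 + 1) * lambertCoeff p.2) = 0 := by
  have hterm : ∀ p ∈ antidiagonal n, lambertCoeff p.1 * ((p.2 + 1) * lambertCoeff p.2)
      = (-1) ^ n / (n + 2).factorial
        * ((n + 2).choose (p.1 + 1) * (p.1 + 1) ^ p.1 * (p.2 + 1) ^ (p.2 + 1) : ℕ) := by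
    rintro ⟨i, j⟩ hij
    rw [HasAntidiagonal.mem_antidiagonal] at hij
    subst hij
    have hfac := Nat.choose_mul_factorial_mul_factorial (show i + 1 ≤ i + j + 2 by omega)
    rw [show i + j + 2 - (i + 1) = j + 1 by omega] at hfac
    have hchoose : ((i + j + 2).choose (i + 1) : ℝ) ≠ 0 := by
      exact_mod_cast (Nat.choose_pos (by omega)).ne'
    rw [← hfac, lambertCoeff, lambertCoeff, neg_pow, neg_pow (_ + 1 : ℝ), pow_add]
    push_cast
    field_simp
    ring
  rw [sum_congr rfl hterm, ← mul_sum, ← Nat.cast_sum, sum_antidiagonal_choose_mul_pow_mul_pow,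
    lambertCoeff, neg_pow]
  push_cast
  field_simp
  ring

theorem succ_mul_abs_lambertCoeff_le (n : ℕ) :
    (n + 1) * |lambertCoeff n| ≤ exp 1 ^ (n + 1) := by
  have h := pow_div_factorial_le_exp (x := (n : ℝ) + 1) (by positivity) (n + 1)
  rw [← exp_nat_mul, mul_one, lambertCoeff, abs_div, abs_pow, abs_neg, abs_of_nonneg (by positivity : (0 : ℝ) ≤ n + 1),
    Nat.abs_cast, mul_div_assoc', ← pow_succ']
  exact_mod_cast h

theorem summable_succ_mul_abs_lambertCoeff_mul_pow (k : ℕ) {r : ℝ} (hr0 : 0 ≤ r)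
    (hr : r < 1 / exp 1) : Summable fun n : ℕ => (n + 1) * |lambertCoeff (n + k)| * r ^ n := by
  have hgeom : Summable fun n : ℕ => exp 1 ^ (k + 1) * (exp 1 * r) ^ n :=
    (summable_geometric_of_lt_one (by positivity) ((lt_div_iff₀' (exp_pos 1)).mp hr)).mul_left _
  refine hgeom.of_nonneg_of_le (fun n => by positivity) fun n => ?_
  calc (n + 1) * |lambertCoeff (n + k)| * r ^ n
      ≤ ((n + k : ℕ) + 1) * |lambertCoeff (n + k)| * r ^ n := by
        gcongr; exact Nat.le_add_right n k
    _ ≤ exp 1 ^ (n + k + 1) * r ^ n := by gcongr; exact succ_mul_abs_lambertCoeff_le _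
    _ = exp 1 ^ (k + 1) * (exp 1 * r) ^ n := by ring

section PowerSeries

variable {c : ℕ → ℝ} {r x : ℝ}

theorem hasDerivAt_tsum_mul_pow_succ (hc : Summable fun n : ℕ => (n + 1) * |c n| * r ^ n)
    (hx : |x| < r) :
    HasDerivAt (fun y => ∑' n, c n * y ^ (n + 1)) (∑' n : ℕ, (n + 1) * c n * x ^ n) x := by
  refine hasDerivAt_tsum_of_isPreconnected (t := Metric.ball (0 : ℝ) r)
    (g := fun n y => c n * y ^ (n + 1)) (g' := fun n y => (n + 1) * c n * y ^ n) hc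
    Metric.isOpen_ball (convex_ball 0 r).isPreconnected (fun n y _ => ?_) (fun n y hy => ?_)
    (Metric.mem_ball_self ((abs_nonneg x).trans_lt hx)) ?_ (mem_ball_zero_iff.mpr hx)
  · exact ((hasDerivAt_pow (n + 1) y).const_mul (c n)).congr_deriv (by push_cast; ring)
  · rw [mem_ball_zero_iff, norm_eq_abs] at hy
    rw [norm_eq_abs, abs_mul, abs_mul, abs_pow, abs_of_nonneg (by positivity : (0 : ℝ) ≤ n + 1)]
    gcongr
  · simp

theorem hasDerivAt_tsum_mul_pow (hc : Summable fun n : ℕ => (n + 1) * |c (n + 1)| * r ^ n)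
    (hx : |x| < r) :
    HasDerivAt (fun y => ∑' n, c n * y ^ n) (∑' n : ℕ, (n + 1) * c (n + 1) * x ^ n) x := by
  have hshift : ∀ y ∈ Metric.ball 0 r,
      ∑' n, c n * y ^ n = c 0 + ∑' n, c (n + 1) * y ^ (n + 1) := by
    intro y hy
    rw [mem_ball_zero_iff, norm_eq_abs] at hy
    have hr : 0 ≤ r := (abs_nonneg y).trans hy.le
    refine Summable.tsum_eq_zero_add ((summable_nat_add_iff 1).mp ?_) |>.trans (by simp)
    refine (hc.mul_right r).of_norm_bounded fun n => ?_
    rw [norm_eq_abs, abs_mul, abs_pow, pow_succ, ← mul_assoc]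
    gcongr
    exact le_mul_of_one_le_left (abs_nonneg _) (by linarith [(Nat.cast_nonneg n : (0 : ℝ) ≤ n)])
  have hball : Metric.ball 0 r ∈ 𝓝 x := Metric.isOpen_ball.mem_nhds (mem_ball_zero_iff.mpr hx)
  exact ((hasDerivAt_tsum_mul_pow_succ (c := fun n => c (n + 1)) hc hx).const_add (c 0))
    |>.congr_of_eventuallyEq (Filter.eventually_of_mem hball hshift)

end PowerSeries

noncomputable def lambertSeries (x : ℝ) : ℝ := ∑' n : ℕ, lambertCoeff n * x ^ (n + 1)

theorem lambertSeries_eq_mul_tsum (x : ℝ) :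
    lambertSeries x = x * ∑' n : ℕ, lambertCoeff n * x ^ n := by
  rw [lambertSeries, ← tsum_mul_left]
  congr 1 with n
  ring

section LambertSeries

variable {x : ℝ}

theorem hasDerivAt_lambertSeries (hx : |x| < 1 / exp 1) :
    HasDerivAt lambertSeries (∑' n : ℕ, (n + 1) * lambertCoeff n * x ^ n) x := by
  obtain ⟨r, hxr, hr⟩ := exists_between hx
  exact hasDerivAt_tsum_mul_pow_succ
    (summable_succ_mul_abs_lambertCoeff_mul_pow 0 ((abs_nonneg x).trans hxr.le) hr) hxr

theorem hasDerivAt_tsum_lambertCoeff_mul_pow (hx : |x| < 1 / exp 1) :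
    HasDerivAt (fun y => ∑' n : ℕ, lambertCoeff n * y ^ n)
      (∑' n : ℕ, (n + 1) * lambertCoeff (n + 1) * x ^ n) x := by
  obtain ⟨r, hxr, hr⟩ := exists_between hx
  exact hasDerivAt_tsum_mul_pow
    (summable_succ_mul_abs_lambertCoeff_mul_pow 1 ((abs_nonneg x).trans hxr.le) hr) hxr

theorem tsum_succ_mul_lambertCoeff_succ_add_mul_eq_zero (hx : |x| < 1 / exp 1) :
    (∑' n : ℕ, (n + 1) * lambertCoeff (n + 1) * x ^ n)
      + (∑' n : ℕ, lambertCoeff n * x ^ n) * (∑' n : ℕ, (n + 1) * lambertCoeff n * x ^ n)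
      = 0 := by
  have hg : Summable fun n : ℕ => ‖(n + 1) * lambertCoeff n * x ^ n‖ := by
    refine (summable_succ_mul_abs_lambertCoeff_mul_pow 0 (abs_nonneg x) hx).congr fun n => ?_
    rw [norm_mul, norm_mul, norm_pow, norm_eq_abs, norm_eq_abs, norm_eq_abs,
      abs_of_nonneg (by positivity : (0 : ℝ) ≤ n + 1)]
    rfl
  have hf : Summable fun n : ℕ => ‖lambertCoeff n * x ^ n‖ := by
    refine hg.of_nonneg_of_le (fun n => norm_nonneg _) fun n => ?_
    rw [mul_assoc, norm_mul (_ + 1)]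
    exact le_mul_of_one_le_left (norm_nonneg _) (by
      rw [norm_eq_abs, abs_of_nonneg (by positivity)]
      exact le_add_of_nonneg_left n.cast_nonneg)
  have hcoeff : ∀ n, ∑ p ∈ antidiagonal n,
      lambertCoeff p.1 * x ^ p.1 * ((p.2 + 1) * lambertCoeff p.2 * x ^ p.2)
      = -((n + 1) * lambertCoeff (n + 1) * x ^ n) := by
    intro n
    calc _ = (∑ p ∈ antidiagonal n, lambertCoeff p.1 * ((p.2 + 1) * lambertCoeff p.2))
          * x ^ n := by
          rw [sum_mul]
          refine sum_congr rfl fun p hp => ?_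
          rw [← HasAntidiagonal.mem_antidiagonal.mp hp, pow_add]
          ring
      _ = _ := by
          rw [eq_neg_of_add_eq_zero_right (lambertCoeff_recurrence n)]
          ring
  rw [tsum_mul_tsum_eq_tsum_sum_antidiagonal_of_summable_norm hf hg, tsum_congr hcoeff, tsum_neg,
    add_neg_cancel]

theorem tsum_lambertCoeff_mul_pow_mul_exp_lambertSeries (hx : |x| < 1 / exp 1) :
    (∑' n : ℕ, lambertCoeff n * x ^ n) * exp (lambertSeries x) = 1 := by
  set s := Metric.ball (0 : ℝ) (1 / exp 1)
  have hs : ∀ y, y ∈ s ↔ |y| < 1 / exp 1 := fun y => by rw [mem_ball_zero_iff, norm_eq_abs]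
  have hderiv : ∀ y ∈ s, HasDerivAt
      (fun z => (∑' n : ℕ, lambertCoeff n * z ^ n) * exp (lambertSeries z)) 0 y := by
    intro y hy
    rw [hs] at hy
    refine ((hasDerivAt_tsum_lambertCoeff_mul_pow hy).mul
      (hasDerivAt_lambertSeries hy).exp).congr_deriv ?_
    linear_combination exp (lambertSeries y) * tsum_succ_mul_lambertCoeff_succ_add_mul_eq_zero hy
  have hconst := Metric.isOpen_ball.is_const_of_deriv_eq_zero (convex_ball _ _).isPreconnected
    (fun y hy => (hderiv y hy).differentiableAt.differentiableWithinAt)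
    (fun y hy => (hderiv y hy).deriv) ((hs x).mpr hx) (Metric.mem_ball_self (by positivity))
  rw [hconst, tsum_eq_single 0 fun n hn => by simp [hn]]
  simp [lambertSeries, lambertCoeff]

end LambertSeries

theorem lambertW_series_solves (x : ℝ) (hx : |x| < 1 / Real.exp 1) :
    (∑' n : ℕ, (-(n + 1 : ℝ)) ^ n / (n + 1).factorial * x ^ (n + 1)) *
      Real.exp (∑' n : ℕ, (-(n + 1 : ℝ)) ^ n / (n + 1).factorial * x ^ (n + 1)) = x := by
  change lambertSeries x * exp (lambertSeries x) = x
  nth_rw 1 [lambertSeries_eq_mul_tsum]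
  rw [mul_assoc, tsum_lambertCoeff_mul_pow_mul_exp_lambertSeries hx, mul_one]
end

section
/- The Omega constant Ω, defined as the unique real number satisfying Ω e^Ω = 1, equals (1/π) ∫₀^π log(1 + (sin t / t) exp(t cot t)) dt. -/
/-!
Put `F w = 1 - e^{-w} / w`. In the strip `0 < Im w < π` the value `F w` never lies on
`(-∞, 0]`, so `log F` is holomorphic there, and on the curve `w(t) = -t cot t + i t` the number
`e^{-w} / w` is the negative real `-(sin t / t) e^{t cot t}`, so `log F (w(t))` is the integrand
of the theorem. By the Cauchy–Riemann equations `Re (log F)'` is both `∂ₓ Re log F` and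
`∂ᵧ Im log F`; integrating it over the region bounded by the curve, the line `Im w = δ` and the
line `Re w = A = -t₁ cot t₁` in both orders (Fubini) writes `∫_δ^{t₁}` of the integrand as
`∫ Re log F` over the vertical side plus `∫ arg F` over the horizontal side. As `δ → 0`,
`arg F (x + iδ)` tends to `π` exactly where `F x = 1 - 1 / (x e^x)` is negative, i.e. for
`0 < x < Ω`, and to `0` elsewhere, which contributes `π Ω`; as `t₁ → π`, `A → ∞` and
`log F = O(e^{-A})` on the vertical side.
-/

open Real Filter MeasureTheory Set Topology Function intervalIntegral

theorem Complex.continuous_mk : Continuous fun p : ℝ × ℝ => (⟨p.1, p.2⟩ : ℂ) :=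
  equivRealProdCLM.symm.continuous

theorem HasDerivAt.re_horizontal {f : ℂ → ℂ} {f' : ℂ} {x y : ℝ} (h : HasDerivAt f f' ⟨x, y⟩) :
    HasDerivAt (fun s : ℝ => (f ⟨s, y⟩).re) f'.re x := by
  have h' : HasDerivAt (fun z => f (z + y * Complex.I)) f' x := by
    apply HasDerivAt.comp_add_const
    rwa [← Complex.mk_eq_add_mul_I]
  simpa only [← Complex.mk_eq_add_mul_I] using h'.real_of_complex

theorem HasDerivAt.im_vertical {f : ℂ → ℂ} {f' : ℂ} {x y : ℝ} (h : HasDerivAt f f' ⟨x, y⟩) :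
    HasDerivAt (fun s : ℝ => (f ⟨x, s⟩).im) f'.re y := by
  have hline : HasDerivAt (fun z : ℂ => x + z * Complex.I) Complex.I y := by
    simpa using ((hasDerivAt_id (y : ℂ)).mul_const Complex.I).const_add (x : ℂ)
  rw [Complex.mk_eq_add_mul_I] at h
  have h' : HasDerivAt (fun z => -Complex.I * f (x + z * Complex.I)) f' y :=
    ((h.comp (y : ℂ) hline).const_mul (-Complex.I)).congr_deriv
      (by linear_combination (-f') * Complex.I_sq)
  simpa [← Complex.mk_eq_add_mul_I] using h'.real_of_complex

theorem integral_re_deriv_horizontal {f : ℂ → ℂ} {U : Set ℂ} (hU : IsOpen U)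
    (hf : DifferentiableOn ℂ f U) {a b y : ℝ} (hseg : ∀ x ∈ uIcc a b, (⟨x, y⟩ : ℂ) ∈ U) :
    ∫ x in a..b, (deriv f ⟨x, y⟩).re = (f ⟨b, y⟩).re - (f ⟨a, y⟩).re := by
  refine integral_eq_sub_of_hasDerivAt (f := fun x => (f ⟨x, y⟩).re)
    (fun x hx => (hf.differentiableAt (hU.mem_nhds (hseg x hx))).hasDerivAt.re_horizontal) ?_
  refine ContinuousOn.intervalIntegrable (Complex.continuous_re.comp_continuousOn ?_)
  exact (hf.deriv hU).continuousOn.comp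
    (Complex.continuous_mk.comp (continuous_id.prodMk continuous_const)).continuousOn hseg

theorem integral_re_deriv_vertical {f : ℂ → ℂ} {U : Set ℂ} (hU : IsOpen U)
    (hf : DifferentiableOn ℂ f U) {x a b : ℝ} (hseg : ∀ y ∈ uIcc a b, (⟨x, y⟩ : ℂ) ∈ U) :
    ∫ y in a..b, (deriv f ⟨x, y⟩).re = (f ⟨x, b⟩).im - (f ⟨x, a⟩).im := by
  refine integral_eq_sub_of_hasDerivAt (f := fun y => (f ⟨x, y⟩).im)
    (fun y hy => (hf.differentiableAt (hU.mem_nhds (hseg y hy))).hasDerivAt.im_vertical) ?_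
  refine ContinuousOn.intervalIntegrable (Complex.continuous_re.comp_continuousOn ?_)
  exact (hf.deriv hU).continuousOn.comp
    (Complex.continuous_mk.comp (continuous_const.prodMk continuous_id)).continuousOn hseg

theorem integral_integral_swap_of_strictMonoOn {c τ : ℝ → ℝ} {a b : ℝ} (hab : a ≤ b)
    (hc : StrictMonoOn c (Icc a b)) (hcm : Measurable c)
    (hτ : ∀ x ∈ Icc (c a) (c b), τ x ∈ Icc a b ∧ c (τ x) = x)
    {G : ℝ → ℝ → ℝ} (hG : ContinuousOn (uncurry G) (Icc (c a) (c b) ×ˢ Icc a b)) :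
    ∫ y in a..b, ∫ x in c y..c b, G x y = ∫ x in c a..c b, ∫ y in a..τ x, G x y := by
  have hcab : c a ≤ c b := hc.monotoneOn (left_mem_Icc.2 hab) (right_mem_Icc.2 hab) hab
  set S : Set (ℝ × ℝ) := {p | c p.2 < p.1}
  have hS : MeasurableSet S := measurableSet_lt (hcm.comp measurable_snd) measurable_fst
  set H : ℝ → ℝ → ℝ := fun x y => S.indicator (uncurry G) (x, y)
  have hH : Integrable (uncurry H)
      ((volume.restrict (Ioc (c a) (c b))).prod (volume.restrict (Ioc a b))) := by
    rw [Measure.prod_restrict, ← Measure.volume_eq_prod]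
    exact ((hG.integrableOn_compact (isCompact_Icc.prod isCompact_Icc)).indicator hS).mono_set
      (prod_mono Ioc_subset_Icc_self Ioc_subset_Icc_self)
  have hfiber_y : ∀ y ∈ Ioc a b, ∫ x in Ioc (c a) (c b), H x y = ∫ x in c y..c b, G x y := by
    intro y hy
    obtain ⟨hcy, hyb⟩ := hc.monotoneOn.mapsTo_Icc (Ioc_subset_Icc_self hy)
    have hH_y : (fun x => H x y) = (Ioi (c y)).indicator (fun x => G x y) := by
      ext x; by_cases h : c y < x <;> simp [H, S, h]
    rw [hH_y, setIntegral_indicator measurableSet_Ioi, Ioc_inter_Ioi, max_eq_right hcy,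
      integral_of_le hyb]
  have hfiber_x : ∀ x ∈ Ioc (c a) (c b), ∫ y in Ioc a b, H x y = ∫ y in a..τ x, G x y := by
    intro x hx
    obtain ⟨⟨hτa, hτb⟩, hcτ⟩ := hτ x (Ioc_subset_Icc_self hx)
    have hH_x : EqOn (fun y => H x y) ((Iio (τ x)).indicator (fun y => G x y)) (Ioo a b) := by
      intro y hy
      have hlt : c y < x ↔ y < τ x := by
        conv_lhs => rw [← hcτ]
        exact hc.lt_iff_lt (Ioo_subset_Icc_self hy) ⟨hτa, hτb⟩
      by_cases h : y < τ x <;> simp [H, S, hlt, h]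
    rw [integral_Ioc_eq_integral_Ioo, setIntegral_congr_fun measurableSet_Ioo hH_x,
      setIntegral_indicator measurableSet_Iio, Ioo_inter_Iio, min_eq_right hτb,
      ← integral_Ioc_eq_integral_Ioo, integral_of_le hτa]
  calc ∫ y in a..b, ∫ x in c y..c b, G x y
      = ∫ y in Ioc a b, ∫ x in Ioc (c a) (c b), H x y := by
        rw [integral_of_le hab]; exact (setIntegral_congr_fun measurableSet_Ioc hfiber_y).symm
    _ = ∫ x in Ioc (c a) (c b), ∫ y in Ioc a b, H x y := (integral_integral_swap hH).symm
    _ = ∫ x in c a..c b, ∫ y in a..τ x, G x y := by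
        rw [integral_of_le hcab]; exact setIntegral_congr_fun measurableSet_Ioc hfiber_x

/-- Integrate `Re f'` over the region `{a ≤ y ≤ b, c y ≤ x ≤ c b}`: in `x` first this gives
`∫ Re f` on the right edge minus the left side, in `y` first (Cauchy–Riemann, and `Im f = 0` on
the graph) it gives `-∫ Im f` on the bottom edge. -/
theorem integral_re_graph_eq_integral_re_add_integral_im {f : ℂ → ℂ} {U : Set ℂ} (hU : IsOpen U)
    (hf : DifferentiableOn ℂ f U) {c : ℝ → ℝ} {a b : ℝ} (hab : a ≤ b)
    (hc : StrictMonoOn c (Icc a b)) (hcc : ContinuousOn c (Icc a b)) (hcm : Measurable c)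
    (hR : Icc (c a) (c b) ×ℂ Icc a b ⊆ U) (him : ∀ y ∈ Icc a b, (f ⟨c y, y⟩).im = 0) :
    ∫ y in a..b, (f ⟨c y, y⟩).re =
      (∫ y in a..b, (f ⟨c b, y⟩).re) + ∫ x in c a..c b, (f ⟨x, a⟩).im := by
  have hc_mem : MapsTo c (Icc a b) (Icc (c a) (c b)) := hc.monotoneOn.mapsTo_Icc
  have hcab : c a ≤ c b := (hc_mem (left_mem_Icc.2 hab)).2
  have hmem : ∀ {x y}, x ∈ Icc (c a) (c b) → y ∈ Icc a b → (⟨x, y⟩ : ℂ) ∈ U :=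
    fun hx hy => hR (Complex.mem_reProdIm.2 ⟨hx, hy⟩)
  obtain ⟨τ, hτ⟩ : ∃ τ : ℝ → ℝ, ∀ x ∈ Icc (c a) (c b), τ x ∈ Icc a b ∧ c (τ x) = x := by
    choose! τ hτ using fun x (hx : x ∈ Icc (c a) (c b)) => intermediate_value_Icc hab hcc hx
    exact ⟨τ, hτ⟩
  have hG : ContinuousOn (uncurry fun x y => (deriv f ⟨x, y⟩).re) (Icc (c a) (c b) ×ˢ Icc a b) :=
    Complex.continuous_re.comp_continuousOn <| (hf.deriv hU).continuousOn.comp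
      Complex.continuous_mk.continuousOn fun p hp => hmem hp.1 hp.2
  have hswap := integral_integral_swap_of_strictMonoOn hab hc hcm hτ hG
  have hhoriz : EqOn (fun y => ∫ x in c y..c b, (deriv f ⟨x, y⟩).re)
      (fun y => (f ⟨c b, y⟩).re - (f ⟨c y, y⟩).re) (uIcc a b) := fun y hy => by
    rw [uIcc_of_le hab] at hy
    refine integral_re_deriv_horizontal hU hf fun x hx => hmem ?_ hy
    rw [uIcc_of_le (hc_mem hy).2] at hx
    exact ⟨(hc_mem hy).1.trans hx.1, hx.2⟩
  have hvert : EqOn (fun x => ∫ y in a..τ x, (deriv f ⟨x, y⟩).re)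
      (fun x => -(f ⟨x, a⟩).im) (uIcc (c a) (c b)) := fun x hx => by
    rw [uIcc_of_le hcab] at hx
    obtain ⟨hτx, hcτ⟩ := hτ x hx
    have hzero : (f ⟨x, τ x⟩).im = 0 := by simpa only [hcτ] using him _ hτx
    dsimp only
    rw [integral_re_deriv_vertical hU hf fun y hy => hmem hx ?_, hzero, zero_sub]
    rw [uIcc_of_le hτx.1] at hy
    exact ⟨hy.1, hy.2.trans hτx.2⟩
  have hint : ∀ {g : ℝ → ℝ}, ContinuousOn g (Icc a b) → (∀ y ∈ Icc a b, (⟨g y, y⟩ : ℂ) ∈ U) →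
      IntervalIntegrable (fun y => (f ⟨g y, y⟩).re) volume a b := fun hg hgU => by
    refine ContinuousOn.intervalIntegrable ?_
    rw [uIcc_of_le hab]
    exact Complex.continuous_re.comp_continuousOn <| hf.continuousOn.comp
      (Complex.continuous_mk.comp_continuousOn (hg.prodMk continuousOn_id)) hgU
  rw [integral_congr hhoriz, integral_congr hvert,
    integral_sub (hint continuousOn_const fun y hy => hmem (right_mem_Icc.2 hcab) hy)
      (hint hcc fun y hy => hmem (hc_mem hy) hy), intervalIntegral.integral_neg] at hswap
  linarith

namespace OmegaIntegral

noncomputable def F (w : ℂ) : ℂ := 1 - Complex.exp (-w) / w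

noncomputable def logF (w : ℂ) : ℂ := Complex.log (F w)

noncomputable def curveRe (t : ℝ) : ℝ := -(t * cot t)

noncomputable def integrand (t : ℝ) : ℝ := log (1 + sin t / t * exp (t * cot t))

lemma exp_neg_div_re (w : ℂ) : (Complex.exp (-w) / w).re =
    exp (-w.re) * (w.re * cos w.im - w.im * sin w.im) / Complex.normSq w := by
  simp only [Complex.div_re, Complex.exp_re, Complex.exp_im, Complex.neg_re, Complex.neg_im,
    cos_neg, sin_neg]
  ring

lemma exp_neg_div_im (w : ℂ) : (Complex.exp (-w) / w).im =
    -(exp (-w.re) * (w.re * sin w.im + w.im * cos w.im)) / Complex.normSq w := by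
  simp only [Complex.div_im, Complex.exp_re, Complex.exp_im, Complex.neg_re, Complex.neg_im,
    cos_neg, sin_neg]
  ring

lemma F_mem_slitPlane {w : ℂ} (hw : w ∈ Complex.im ⁻¹' Ioo 0 π) : F w ∈ Complex.slitPlane := by
  obtain ⟨h0, h1⟩ := hw
  have hsin := sin_pos_of_pos_of_lt_pi h0 h1
  have hN : 0 < Complex.normSq w := Complex.normSq_pos.2 fun h => by simp [h] at h0
  have hexp := exp_pos (-w.re)
  rw [Complex.mem_slitPlane_iff]
  by_contra! h
  have him : w.re * sin w.im + w.im * cos w.im = 0 := by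
    simpa only [F, Complex.sub_im, Complex.one_im, exp_neg_div_im, zero_sub, neg_div, neg_neg,
      div_eq_zero_iff, hN.ne', or_false, mul_eq_zero, hexp.ne', false_or] using h.2
  have hre : 0 < w.re * cos w.im - w.im * sin w.im := by
    have := h.1
    simp only [F, Complex.sub_re, Complex.one_re, exp_neg_div_re, sub_nonpos] at this
    have := (le_div_iff₀ hN).1 this
    by_contra! hneg
    nlinarith [mul_nonpos_of_nonneg_of_nonpos hexp.le hneg]
  -- `Im F w = 0` forces `Re (e^{-w} / w) < 0`, i.e. `Re F w > 1`
  have key : sin w.im * (w.re * cos w.im - w.im * sin w.im) = -w.im := by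
    linear_combination cos w.im * him - w.im * sin_sq_add_cos_sq w.im
  linarith [mul_pos hsin hre]

lemma differentiableOn_logF : DifferentiableOn ℂ logF (Complex.im ⁻¹' Ioo 0 π) := by
  intro w hw
  have hw0 : w ≠ 0 := fun h => by simp [h] at hw
  have hF : DifferentiableAt ℂ F w := by unfold F; fun_prop (disch := exact hw0)
  exact (hF.clog (F_mem_slitPlane hw)).differentiableWithinAt

lemma F_curve {t : ℝ} (ht : t ∈ Ioo 0 π) :
    F ⟨curveRe t, t⟩ = ((1 + sin t / t * exp (t * cot t) : ℝ) : ℂ) := by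
  have hsin := (sin_pos_of_pos_of_lt_pi ht.1 ht.2).ne'
  have ht0 := ht.1.ne'
  apply Complex.ext
  · simp only [F, Complex.sub_re, Complex.one_re, exp_neg_div_re, Complex.normSq_mk,
      Complex.ofReal_re, curveRe, cot_eq_cos_div_sin, neg_neg]
    field_simp
    ring
  · simp only [F, Complex.sub_im, Complex.one_im, exp_neg_div_im, Complex.ofReal_im, curveRe,
      cot_eq_cos_div_sin]
    field_simp
    ring

lemma one_add_sin_div_mul_exp_pos {t : ℝ} (ht : t ∈ Ioo 0 π) :
    0 < 1 + sin t / t * exp (t * cot t) := by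
  have := sin_pos_of_pos_of_lt_pi ht.1 ht.2
  have := ht.1
  positivity

lemma logF_curve {t : ℝ} (ht : t ∈ Ioo 0 π) : logF ⟨curveRe t, t⟩ = integrand t := by
  rw [logF, F_curve ht, ← Complex.ofReal_log (one_add_sin_div_mul_exp_pos ht).le, integrand]

lemma norm_logF_le {w : ℂ} (hw : 1 ≤ w.re) : ‖logF w‖ ≤ 3 / 2 * exp (-w.re) := by
  have hz : ‖-(Complex.exp (-w) / w)‖ ≤ exp (-w.re) := by
    rw [norm_neg, norm_div, Complex.norm_exp, Complex.neg_re]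
    exact div_le_self (exp_pos _).le (hw.trans (Complex.re_le_norm w))
  have hhalf : exp (-w.re) ≤ 1 / 2 := by
    have := exp_one_gt_d9
    calc exp (-w.re) ≤ exp (-1) := exp_le_exp.2 (by linarith)
      _ ≤ 1 / 2 := by rw [exp_neg, inv_le_comm₀ (exp_pos 1) (by norm_num)]; linarith
  calc ‖logF w‖ = ‖Complex.log (1 + -(Complex.exp (-w) / w))‖ := by
        rw [logF, F, ← sub_eq_add_neg]
    _ ≤ 3 / 2 * ‖-(Complex.exp (-w) / w)‖ :=
        Complex.norm_log_one_add_half_le_self (hz.trans hhalf)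
    _ ≤ 3 / 2 * exp (-w.re) := by gcongr

lemma strictMonoOn_mul_exp : StrictMonoOn (fun x => x * exp x) (Ici 0) :=
  fun x hx _ _ hxy => mul_lt_mul'' hxy (exp_lt_exp.2 hxy) hx (exp_pos x).le

lemma omega_pos {Ω : ℝ} (hΩ : Ω * exp Ω = 1) : 0 < Ω := by
  by_contra! h
  nlinarith [exp_pos Ω]

lemma omega_lt_one {Ω : ℝ} (hΩ : Ω * exp Ω = 1) : Ω < 1 := by
  by_contra! h
  nlinarith [add_one_le_exp Ω]

lemma F_ofReal (x : ℝ) : F x = ((1 - exp (-x) / x : ℝ) : ℂ) := by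
  simp [F, ← Complex.ofReal_neg, ← Complex.ofReal_exp]

lemma exp_neg_div_eq_inv (x : ℝ) : exp (-x) / x = (x * exp x)⁻¹ := by
  rw [exp_neg, mul_inv, div_eq_mul_inv, mul_comm]

lemma one_sub_exp_neg_div_pos_of_neg {x : ℝ} (hx : x < 0) : 0 < 1 - exp (-x) / x := by
  linarith [div_neg_of_pos_of_neg (exp_pos (-x)) hx]

lemma one_sub_exp_neg_div_neg_iff {Ω x : ℝ} (hΩ : Ω * exp Ω = 1) (hx : 0 < x) :
    1 - exp (-x) / x < 0 ↔ x < Ω := by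
  rw [sub_neg, exp_neg_div_eq_inv, one_lt_inv₀ (by positivity), ← hΩ,
    strictMonoOn_mul_exp.lt_iff_lt hx.le (omega_pos hΩ).le]

lemma one_sub_exp_neg_div_pos_iff {Ω x : ℝ} (hΩ : Ω * exp Ω = 1) (hx : 0 < x) :
    0 < 1 - exp (-x) / x ↔ Ω < x := by
  rw [sub_pos, exp_neg_div_eq_inv, inv_lt_one₀ (by positivity), ← hΩ,
    strictMonoOn_mul_exp.lt_iff_lt (omega_pos hΩ).le hx.le]

lemma im_F_nonneg {w : ℂ} (hre : 0 < w.re) (h0 : 0 ≤ w.im) (h1 : w.im ≤ π / 2) :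
    0 ≤ (F w).im := by
  have hsin := sin_nonneg_of_nonneg_of_le_pi h0 (by linarith [pi_pos])
  have hcos := cos_nonneg_of_mem_Icc ⟨by linarith [pi_pos], h1⟩
  rw [F, Complex.sub_im, Complex.one_im, exp_neg_div_im, zero_sub, neg_div, neg_neg]
  exact div_nonneg (mul_nonneg (exp_pos _).le
    (add_nonneg (mul_nonneg hre.le hsin) (mul_nonneg h0 hcos))) (Complex.normSq_nonneg w)

lemma tendsto_F_vertical {x : ℝ} (hx : x ≠ 0) :
    Tendsto (fun δ : ℝ => F ⟨x, δ⟩) (𝓝 0) (𝓝 ((1 - exp (-x) / x : ℝ) : ℂ)) := by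
  have hF : ContinuousAt F x := by
    unfold F; fun_prop (disch := exact_mod_cast hx)
  rw [← F_ofReal]
  exact hF.tendsto.comp
    ((Complex.continuous_mk.comp (continuous_const.prodMk continuous_id)).tendsto 0)

lemma tendsto_arg_F_of_pos {x : ℝ} (hx : x ≠ 0) (hpos : 0 < 1 - exp (-x) / x) :
    Tendsto (fun δ : ℝ => Complex.arg (F ⟨x, δ⟩)) (𝓝 0) (𝓝 0) := by
  have hslit : ((1 - exp (-x) / x : ℝ) : ℂ) ∈ Complex.slitPlane :=
    Complex.ofReal_mem_slitPlane.2 hpos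
  have h := (Complex.continuousAt_arg hslit).tendsto.comp (tendsto_F_vertical hx)
  rwa [Complex.arg_ofReal_of_nonneg hpos.le] at h

lemma tendsto_arg_F_of_neg {x : ℝ} (hx : 0 < x) (hneg : 1 - exp (-x) / x < 0) :
    Tendsto (fun δ : ℝ => Complex.arg (F ⟨x, δ⟩)) (𝓝[>] 0) (𝓝 π) := by
  have him : ∀ᶠ δ in 𝓝[>] (0 : ℝ), 0 ≤ (F ⟨x, δ⟩).im := by
    filter_upwards [Ioo_mem_nhdsGT (half_pos pi_pos)] with δ hδ
    exact im_F_nonneg hx hδ.1.le hδ.2.le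
  refine (Complex.tendsto_arg_nhdsWithin_im_nonneg_of_re_neg_of_im_zero
    (by rwa [Complex.ofReal_re]) (Complex.ofReal_im _)).comp
    (tendsto_nhdsWithin_iff.2 ⟨?_, him⟩)
  exact (tendsto_F_vertical hx.ne').mono_left nhdsWithin_le_nhds

lemma measurable_arg_F_horizontal (δ : ℝ) : Measurable fun x : ℝ => Complex.arg (F ⟨x, δ⟩) :=
  Complex.measurable_arg.comp <| (by unfold F; fun_prop : Measurable F).comp
    (Complex.continuous_mk.comp (continuous_id.prodMk continuous_const)).measurable

lemma intervalIntegrable_arg_F_horizontal (δ a b : ℝ) :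
    IntervalIntegrable (fun x : ℝ => Complex.arg (F ⟨x, δ⟩)) volume a b :=
  intervalIntegrable_const.mono_fun' (measurable_arg_F_horizontal δ).aestronglyMeasurable
    (ae_of_all _ fun _ => (Real.norm_eq_abs _).trans_le (Complex.abs_arg_le_pi _))

lemma tendsto_integral_arg_F {Ω A : ℝ} (hΩ : Ω * exp Ω = 1) (hA : Ω ≤ A) :
    Tendsto (fun δ : ℝ => ∫ x in (-1)..A, Complex.arg (F ⟨x, δ⟩)) (𝓝[>] 0) (𝓝 (π * Ω)) := by
  have hΩ0 := omega_pos hΩ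
  have hvalue : ∫ x in (-1)..A, (Ioo 0 Ω).indicator (fun _ => π) x = π * Ω := by
    have hset : Ioc (-1) A ∩ Ioo 0 Ω = Ioo 0 Ω :=
      inter_eq_right.2 fun x hx => ⟨by linarith [hx.1], hx.2.le.trans hA⟩
    rw [integral_of_le (by linarith), setIntegral_indicator measurableSet_Ioo, hset,
      setIntegral_const, Real.volume_real_Ioo_of_le hΩ0.le, sub_zero, smul_eq_mul, mul_comm]
  rw [← hvalue]
  refine tendsto_integral_filter_of_dominated_convergence (fun _ => π)
    (Eventually.of_forall fun δ => (measurable_arg_F_horizontal δ).aestronglyMeasurable)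
    (Eventually.of_forall fun δ => ae_of_all _ fun x _ =>
      (Real.norm_eq_abs _).trans_le (Complex.abs_arg_le_pi _))
    intervalIntegrable_const ?_
  filter_upwards [volume.ae_ne 0, volume.ae_ne Ω] with x hx0 hxΩ _
  rcases hx0.lt_or_gt with hneg | hpos
  · rw [indicator_of_notMem fun h => hneg.not_gt h.1]
    exact (tendsto_arg_F_of_pos hx0 (one_sub_exp_neg_div_pos_of_neg hneg)).mono_left
      nhdsWithin_le_nhds
  rcases hxΩ.lt_or_gt with hlt | hgt
  · rw [indicator_of_mem (show x ∈ Ioo 0 Ω from ⟨hpos, hlt⟩)]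
    exact tendsto_arg_F_of_neg hpos ((one_sub_exp_neg_div_neg_iff hΩ hpos).2 hlt)
  · rw [indicator_of_notMem fun h => hgt.not_gt h.2]
    exact (tendsto_arg_F_of_pos hx0 ((one_sub_exp_neg_div_pos_iff hΩ hpos).2 hgt)).mono_left
      nhdsWithin_le_nhds

lemma hasDerivAt_curveRe {t : ℝ} (ht : t ∈ Ioo 0 π) :
    HasDerivAt curveRe ((t - sin t * cos t) / sin t ^ 2) t := by
  have hsin := (sin_pos_of_pos_of_lt_pi ht.1 ht.2).ne'
  have h : HasDerivAt (fun y => -(y * (cos y / sin y)))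
      (-(1 * (cos t / sin t) + t * ((-sin t * sin t - cos t * cos t) / sin t ^ 2))) t :=
    ((hasDerivAt_id' t).mul ((hasDerivAt_cos t).div (hasDerivAt_sin t) hsin)).neg
  have hcurve : curveRe = fun y => -(y * (cos y / sin y)) := by
    funext y; rw [curveRe, cot_eq_cos_div_sin]
  rw [hcurve]
  refine h.congr_deriv ?_
  field_simp
  linear_combination t * sin_sq_add_cos_sq t

lemma strictMonoOn_curveRe : StrictMonoOn curveRe (Ioo 0 π) := by
  refine strictMonoOn_of_hasDerivWithinAt_pos (convex_Ioo 0 π)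
    (fun t ht => (hasDerivAt_curveRe ht).continuousAt.continuousWithinAt)
    (fun t ht => (hasDerivAt_curveRe (interior_subset ht)).hasDerivWithinAt) fun t ht => ?_
  rw [interior_Ioo] at ht
  have hsin := sin_pos_of_pos_of_lt_pi ht.1 ht.2
  have h2 : sin (2 * t) < 2 * t := sin_lt (by linarith [ht.1])
  rw [sin_two_mul] at h2
  exact div_pos (by linarith) (by positivity)

lemma measurable_curveRe : Measurable curveRe := by
  unfold curveRe; simp_rw [cot_eq_cos_div_sin]; fun_prop

lemma tendsto_curveRe_nhdsGT_zero : Tendsto curveRe (𝓝[>] 0) (𝓝 (-1)) := by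
  have hsinc : Tendsto (fun t => -(cos t / sinc t)) (𝓝 0) (𝓝 (-1)) := by
    have h : Tendsto (fun t => -(cos t / sinc t)) (𝓝 0) (𝓝 (-(cos 0 / sinc 0))) :=
      (continuous_cos.continuousAt.div continuous_sinc.continuousAt (by simp)).neg.tendsto
    rwa [cos_zero, sinc_zero, div_one] at h
  refine (hsinc.mono_left nhdsWithin_le_nhds).congr' ?_
  filter_upwards [self_mem_nhdsWithin] with t (ht : 0 < t)
  rw [curveRe, cot_eq_cos_div_sin, sinc_of_ne_zero ht.ne']
  field_simp

lemma tendsto_curveRe_nhdsLT_pi : Tendsto curveRe (𝓝[<] π) atTop := by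
  have hsin : Tendsto sin (𝓝[<] π) (𝓝[>] 0) := by
    refine tendsto_nhdsWithin_iff.2 ⟨?_, ?_⟩
    · simpa using (continuous_sin.tendsto π).mono_left nhdsWithin_le_nhds
    · filter_upwards [Ioo_mem_nhdsLT pi_pos] with t ht
      exact sin_pos_of_pos_of_lt_pi ht.1 ht.2
  have hnum : Tendsto (fun t => -(t * cos t)) (𝓝[<] π) (𝓝 π) := by
    have h : Tendsto (fun t => -(t * cos t)) (𝓝 π) (𝓝 (-(π * cos π))) :=
      (continuous_id.mul continuous_cos).neg.tendsto π
    rw [cos_pi, mul_neg_one, neg_neg] at h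
    exact h.mono_left nhdsWithin_le_nhds
  refine (hnum.pos_mul_atTop pi_pos (tendsto_inv_nhdsGT_zero.comp hsin)).congr fun t => ?_
  simp [curveRe, cot_eq_cos_div_sin, div_eq_mul_inv, mul_assoc]

lemma tendsto_integral_im_logF {Ω A : ℝ} (hΩ : Ω * exp Ω = 1) (hA : Ω ≤ A) :
    Tendsto (fun δ => ∫ x in curveRe δ..A, (logF ⟨x, δ⟩).im) (𝓝[>] 0) (𝓝 (π * Ω)) := by
  simp only [logF, Complex.log_im]
  have hsmall : Tendsto (fun δ => ∫ x in curveRe δ..(-1), Complex.arg (F ⟨x, δ⟩)) (𝓝[>] 0)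
      (𝓝 0) := by
    refine squeeze_zero_norm (fun δ => norm_integral_le_of_norm_le_const fun x _ =>
      (Real.norm_eq_abs _).trans_le (Complex.abs_arg_le_pi _)) ?_
    simpa using ((tendsto_curveRe_nhdsGT_zero.const_sub (-1)).abs.const_mul π)
  have h := (tendsto_integral_arg_F hΩ hA).add hsmall
  rw [add_zero] at h
  refine h.congr fun δ => ?_
  rw [add_comm, integral_add_adjacent_intervals (intervalIntegrable_arg_F_horizontal _ _ _)
    (intervalIntegrable_arg_F_horizontal _ _ _)]

lemma mul_cot_lt_one {t : ℝ} (ht : t ∈ Ioo 0 π) : t * cot t < 1 := by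
  have hsin := sin_pos_of_pos_of_lt_pi ht.1 ht.2
  rw [cot_eq_cos_div_sin, ← mul_div_assoc, div_lt_one hsin]
  rcases le_or_gt (cos t) 0 with hcos | hcos
  · nlinarith [ht.1]
  · have htan := lt_tan ht.1 (by
      by_contra! h
      linarith [cos_nonpos_of_pi_div_two_le_of_le h (by linarith [ht.2])])
    rwa [tan_eq_sin_div_cos, lt_div_iff₀ hcos] at htan

lemma abs_integrand_le {t : ℝ} (ht : t ∈ Ioo 0 π) : |integrand t| ≤ exp 1 := by
  have hsinc : sin t / t ≤ 1 := div_le_one_of_le₀ (sin_le ht.1.le) ht.1.le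
  have hexp : exp (t * cot t) ≤ exp 1 := exp_le_exp.2 (mul_cot_lt_one ht).le
  have hpos : 0 ≤ sin t / t * exp (t * cot t) := by
    have := sin_pos_of_pos_of_lt_pi ht.1 ht.2
    have := ht.1
    positivity
  rw [integrand, abs_of_nonneg (log_nonneg (by linarith))]
  calc log (1 + sin t / t * exp (t * cot t)) ≤ sin t / t * exp (t * cot t) := by
        linarith [log_le_sub_one_of_pos (one_add_sin_div_mul_exp_pos ht)]
    _ ≤ 1 * exp 1 := by gcongr
    _ = exp 1 := one_mul _

lemma integrableOn_integrand : IntegrableOn integrand (uIcc 0 π) := by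
  rw [uIcc_of_le pi_pos.le, integrableOn_Icc_iff_integrableOn_Ioo]
  refine Measure.integrableOn_of_bounded (M := exp 1) measure_Ioo_lt_top.ne ?_
    ((ae_restrict_iff' measurableSet_Ioo).2 (ae_of_all _ fun t ht => abs_integrand_le ht))
  have : Measurable integrand := by
    unfold integrand; simp_rw [cot_eq_cos_div_sin]; fun_prop
  exact this.aestronglyMeasurable

lemma integral_integrand_eq_add {δ t₁ : ℝ} (hδ : 0 < δ) (hδt : δ ≤ t₁) (ht₁ : t₁ < π) :
    ∫ y in δ..t₁, integrand y = (∫ y in δ..t₁, (logF ⟨curveRe t₁, y⟩).re) +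
      ∫ x in curveRe δ..curveRe t₁, (logF ⟨x, δ⟩).im := by
  have hsub : Icc δ t₁ ⊆ Ioo 0 π := Icc_subset_Ioo hδ ht₁
  rw [← integral_re_graph_eq_integral_re_add_integral_im
    (isOpen_Ioo.preimage Complex.continuous_im) differentiableOn_logF hδt
    (strictMonoOn_curveRe.mono hsub)
    (fun t ht => (hasDerivAt_curveRe (hsub ht)).continuousAt.continuousWithinAt)
    measurable_curveRe (fun z hz => hsub (Complex.mem_reProdIm.1 hz).2)
    (fun y hy => by rw [logF_curve (hsub hy), Complex.ofReal_im])]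
  refine integral_congr fun y hy => ?_
  rw [uIcc_of_le hδt] at hy
  simp only [logF_curve (hsub hy), Complex.ofReal_re]

lemma abs_integral_integrand_sub_le {Ω t₁ : ℝ} (hΩ : Ω * exp Ω = 1) (ht₁ : t₁ ∈ Ioo 0 π)
    (hA : 1 ≤ curveRe t₁) :
    |(∫ t in 0..t₁, integrand t) - π * Ω| ≤ 3 / 2 * exp (-curveRe t₁) * π := by
  have hleft : Tendsto (fun δ => ∫ y in δ..t₁, integrand y) (𝓝[>] 0)
      (𝓝 (∫ y in 0..t₁, integrand y)) := by
    have hsub : uIcc 0 t₁ ⊆ uIcc 0 π := by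
      rw [uIcc_of_le ht₁.1.le, uIcc_of_le pi_pos.le]; exact Icc_subset_Icc_right ht₁.2.le
    have hmem : uIcc 0 t₁ ∈ 𝓝[>] 0 := by
      rw [uIcc_of_le ht₁.1.le]; exact mem_of_superset (Ioo_mem_nhdsGT ht₁.1) Ioo_subset_Icc_self
    exact ((continuousOn_primitive_interval_left (integrableOn_integrand.mono_set hsub)) 0
      left_mem_uIcc).tendsto.mono_left (nhdsWithin_le_of_mem hmem)
  have hbottom := tendsto_integral_im_logF hΩ ((omega_lt_one hΩ).le.trans hA)
  refine le_of_tendsto (hleft.sub hbottom).abs ?_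
  filter_upwards [Ioo_mem_nhdsGT ht₁.1] with δ hδ
  rw [integral_integrand_eq_add hδ.1 hδ.2.le ht₁.2, add_sub_cancel_right]
  have hre (y : ℝ) : ‖(logF ⟨curveRe t₁, y⟩).re‖ ≤ 3 / 2 * exp (-curveRe t₁) :=
    (Complex.abs_re_le_norm _).trans (norm_logF_le hA)
  calc |∫ y in δ..t₁, (logF ⟨curveRe t₁, y⟩).re|
      ≤ 3 / 2 * exp (-curveRe t₁) * |t₁ - δ| :=
        norm_integral_le_of_norm_le_const fun y _ => hre y
    _ ≤ 3 / 2 * exp (-curveRe t₁) * π := by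
        gcongr
        rw [abs_of_pos (sub_pos.2 hδ.2)]
        linarith [hδ.1, ht₁.2]

lemma integral_integrand_eq {Ω : ℝ} (hΩ : Ω * exp Ω = 1) : ∫ t in 0..π, integrand t = π * Ω := by
  have hprimitive : Tendsto (fun t₁ => ∫ t in 0..t₁, integrand t) (𝓝[<] π)
      (𝓝 (∫ t in 0..π, integrand t)) := by
    have hmem : uIcc 0 π ∈ 𝓝[<] π := by rw [uIcc_of_le pi_pos.le]; exact Icc_mem_nhdsLT pi_pos
    exact ((continuousOn_primitive_interval integrableOn_integrand) π
      right_mem_uIcc).tendsto.mono_left (nhdsWithin_le_of_mem hmem)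
  have hbound : Tendsto (fun t₁ => 3 / 2 * exp (-curveRe t₁) * π) (𝓝[<] π) (𝓝 0) := by
    simpa using ((tendsto_exp_atBot.comp (tendsto_neg_atTop_atBot.comp
      tendsto_curveRe_nhdsLT_pi)).const_mul (3 / 2)).mul_const π
  have hclose : ∀ᶠ t₁ in 𝓝[<] π,
      ‖(∫ t in 0..t₁, integrand t) - π * Ω‖ ≤ 3 / 2 * exp (-curveRe t₁) * π := by
    filter_upwards [Ioo_mem_nhdsLT pi_pos, tendsto_curveRe_nhdsLT_pi.eventually_ge_atTop 1]
      with t₁ ht₁ hA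
    exact abs_integral_integrand_sub_le hΩ ht₁ hA
  exact tendsto_nhds_unique hprimitive
    (tendsto_sub_nhds_zero_iff.1 (squeeze_zero_norm' hclose hbound))

end OmegaIntegral

open OmegaIntegral in
theorem omega_integral_rep (Ω : ℝ) (hΩ : Ω * Real.exp Ω = 1) :
    Ω = (1 / π) * ∫ t in (0:ℝ)..π,
      Real.log (1 + (Real.sin t / t) * Real.exp (t * Real.cot t)) := by
  change Ω = 1 / π * ∫ t in (0:ℝ)..π, integrand t
  rw [integral_integrand_eq hΩ]
  field_simp
end

section
/- The radius of convergence of the power series ∑_{n=1}^∞ ((-n)^{n-1} / n!) x^n equals 1/e. -/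
/-!
The absolute values of consecutive terms have ratio `((n + 2) / (n + 1)) ^ n * |x|`, and
`((n + 2) / (n + 1)) ^ n = (1 + 1 / (n + 1)) ^ (n + 1) / (1 + 1 / (n + 1)) → e`, so the ratio test
decides convergence on both sides of `|x| = 1 / e`.
-/

open Real Filter Topology

noncomputable def lambertWTerm (x : ℝ) (n : ℕ) : ℝ :=
  (-(n + 1 : ℝ)) ^ n / (n + 1).factorial * x ^ (n + 1)

lemma norm_lambertWTerm (x : ℝ) (n : ℕ) :
    ‖lambertWTerm x n‖ = (n + 1 : ℝ) ^ n / (n + 1).factorial * |x| ^ (n + 1) := by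
  rw [lambertWTerm, norm_mul, norm_div, norm_pow, norm_pow, norm_neg, Real.norm_eq_abs,
    Real.norm_eq_abs, Real.norm_eq_abs, Nat.abs_cast,
    abs_of_nonneg (by positivity : (0 : ℝ) ≤ n + 1)]

lemma lambertWTerm_ne_zero {x : ℝ} (hx : x ≠ 0) (n : ℕ) : lambertWTerm x n ≠ 0 := by
  rw [← norm_ne_zero_iff, norm_lambertWTerm]
  have : 0 < |x| := abs_pos.mpr hx
  positivity

lemma norm_lambertWTerm_succ_div (x : ℝ) (n : ℕ) :
    ‖lambertWTerm x (n + 1)‖ / ‖lambertWTerm x n‖ =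
      ((n + 2 : ℝ) / (n + 1)) ^ n * |x| := by
  rcases eq_or_ne x 0 with rfl | hx
  · simp [lambertWTerm]
  have hx' : |x| ≠ 0 := abs_ne_zero.mpr hx
  rw [norm_lambertWTerm, norm_lambertWTerm, Nat.factorial_succ (n + 1)]
  push_cast
  rw [div_pow]
  field_simp
  ring

lemma tendsto_add_two_div_add_one_pow_exp :
    Tendsto (fun n : ℕ => ((n + 2 : ℝ) / (n + 1)) ^ n) atTop (𝓝 (exp 1)) := by
  have hpow :
      Tendsto (fun n : ℕ => (1 + 1 / ((n : ℝ) + 1)) ^ (n + 1)) atTop (𝓝 (exp 1)) := by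
    refine ((tendsto_one_add_div_pow_exp 1).comp (tendsto_add_atTop_nat 1)).congr fun n => ?_
    simp
  have hbase : Tendsto (fun n : ℕ => 1 + 1 / ((n : ℝ) + 1)) atTop (𝓝 1) := by
    simpa using (tendsto_const_nhds (x := (1 : ℝ))).add tendsto_one_div_add_atTop_nhds_zero_nat
  refine (div_one (exp 1) ▸ hpow.div hbase one_ne_zero).congr fun n => ?_
  have hbase_eq : 1 + 1 / ((n : ℝ) + 1) = (n + 2) / (n + 1) := by field_simp; ring
  rw [Pi.div_apply, hbase_eq, pow_succ, mul_div_cancel_right₀ _ (by positivity)]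

lemma tendsto_norm_lambertWTerm_ratio (x : ℝ) :
    Tendsto (fun n => ‖lambertWTerm x (n + 1)‖ / ‖lambertWTerm x n‖) atTop
      (𝓝 (exp 1 * |x|)) := by
  simpa only [norm_lambertWTerm_succ_div] using
    tendsto_add_two_div_add_one_pow_exp.mul_const |x|

theorem lambertW_series_radius (x : ℝ) :
    (|x| < 1 / Real.exp 1 →
      Summable (fun n : ℕ => (-(n + 1 : ℝ)) ^ n / (n + 1).factorial * x ^ (n + 1))) ∧
    (|x| > 1 / Real.exp 1 →
      ¬ Summable (fun n : ℕ => (-(n + 1 : ℝ)) ^ n / (n + 1).factorial * x ^ (n + 1))) := by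
  have hratio := tendsto_norm_lambertWTerm_ratio x
  refine ⟨fun hx => ?_, fun hx => ?_⟩
  · rw [lt_div_iff₀ (exp_pos 1), mul_comm] at hx
    rcases eq_or_ne x 0 with rfl | hx0
    · simp
    · exact summable_of_ratio_test_tendsto_lt_one hx
        (.of_forall (lambertWTerm_ne_zero hx0)) hratio
  · rw [gt_iff_lt, div_lt_iff₀ (exp_pos 1), mul_comm] at hx
    exact not_summable_of_ratio_test_tendsto_gt_one hx hratio
end

section
/- For ν = 1, the integral ∫₀^π (sin t / t) exp(t cot t) dt equals π. -/
open Real Set Filter Topology intervalIntegral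

/-!
On `(0, π)` the integrand has the primitive `t + Ψ t`, where
`Ψ t = ∫₀¹ exp (u t cot t) sin (t u) / u du`, so that `t + Ψ t = Im Ei (t e^{it} / sin t)`.
Differentiating under the integral sign turns the `u`-integrand into an exact `u`-derivative,
whence `Ψ' t = exp (t cot t) sin t / t - 1`. Since `0 ≤ Ψ t ≤ t ∫₀¹ exp (u t cot t) du`
and `t cot t ≤ 1`, `Ψ` vanishes at `0⁺`, and also at `π⁻` because `t cot t → -∞` there.
So the integral equals `π - 0`.
-/

theorem mul_cos_le_sin {t : ℝ} (h0 : 0 ≤ t) (hπ : t ≤ π) : t * cos t ≤ sin t := by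
  rcases lt_or_ge t (π / 2) with ht | ht
  · have hcos : 0 < cos t := cos_pos_of_mem_Ioo ⟨by linarith [pi_pos], ht⟩
    have := le_tan h0 ht
    rwa [tan_eq_sin_div_cos, le_div_iff₀ hcos] at this
  · have hcos : cos t ≤ 0 := cos_nonpos_of_pi_div_two_le_of_le ht (by linarith [pi_pos])
    nlinarith [sin_nonneg_of_nonneg_of_le_pi h0 hπ]

theorem mul_cot_le_one {t : ℝ} (h0 : 0 ≤ t) (hπ : t ≤ π) : t * cot t ≤ 1 := by
  rw [cot_eq_cos_div_sin, ← mul_div_assoc]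
  exact div_le_one_of_le₀ (mul_cos_le_sin h0 hπ) (sin_nonneg_of_nonneg_of_le_pi h0 hπ)

theorem hasDerivAt_cot {x : ℝ} (h : sin x ≠ 0) : HasDerivAt cot (-(1 + cot x ^ 2)) x := by
  rw [show cot = fun y => cos y / sin y from funext cot_eq_cos_div_sin]
  refine ((hasDerivAt_cos x).div (hasDerivAt_sin x) h).congr_deriv ?_
  field_simp
  ring

theorem continuousOn_cot : ContinuousOn cot {x | sin x ≠ 0} := fun _ hx =>
  (hasDerivAt_cot hx).continuousAt.continuousWithinAt

theorem tendsto_mul_cot_nhdsLT_pi : Tendsto (fun t => t * cot t) (𝓝[<] π) atBot := by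
  have hsin : Tendsto sin (𝓝[<] π) (𝓝[>] 0) := by
    refine tendsto_nhdsWithin_iff.2 ⟨?_, ?_⟩
    · exact (continuous_sin.tendsto' π 0 sin_pi).mono_left nhdsWithin_le_nhds
    · filter_upwards [Ioo_mem_nhdsLT pi_pos] with t ht using sin_pos_of_pos_of_lt_pi ht.1 ht.2
  have hcos : Tendsto (fun t => t * cos t) (𝓝[<] π) (𝓝 (-π)) := by
    refine ((by fun_prop : Continuous fun t => t * cos t).tendsto' π (-π) ?_).mono_left
      nhdsWithin_le_nhds
    simp
  convert hcos.neg_mul_atTop (neg_lt_zero.2 pi_pos) hsin.inv_tendsto_nhdsGT_zero using 2 with t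
  simp [cot_eq_cos_div_sin, div_eq_mul_inv, mul_assoc]

theorem integral_exp_mul_of_ne_zero {g : ℝ} (hg : g ≠ 0) :
    ∫ u in (0:ℝ)..1, exp (g * u) = (exp g - 1) / g := by
  rw [integral_comp_mul_left (fun u => exp u) hg, integral_exp]
  simp [div_eq_inv_mul]

theorem integral_exp_mul_le_exp_one {g : ℝ} (hg : g ≤ 1) :
    ∫ u in (0:ℝ)..1, exp (g * u) ≤ exp 1 := by
  calc ∫ u in (0:ℝ)..1, exp (g * u) ≤ ∫ _ in (0:ℝ)..1, exp 1 := by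
        refine integral_mono_on zero_le_one
          ((by fun_prop : Continuous fun u => exp (g * u)).intervalIntegrable _ _)
          intervalIntegrable_const fun u hu => ?_
        exact exp_le_exp.2 (by nlinarith [mul_nonneg (sub_nonneg.2 hg) hu.1, hu.2])
    _ = exp 1 := by simp

theorem tendsto_integral_exp_mul_atBot :
    Tendsto (fun g => ∫ u in (0:ℝ)..1, exp (g * u)) atBot (𝓝 0) := by
  have h := (tendsto_exp_atBot.sub_const 1).mul (tendsto_inv_atBot_zero (𝕜 := ℝ))
  rw [mul_zero] at h
  refine h.congr' ?_
  filter_upwards [eventually_lt_atBot 0] with g hg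
  rw [integral_exp_mul_of_ne_zero hg.ne, div_eq_mul_inv]

theorem abs_sin_mul_div_le (t u : ℝ) : |sin (t * u) / u| ≤ |t| := by
  rw [abs_div]
  refine div_le_of_le_mul₀ (abs_nonneg u) (abs_nonneg t) ?_
  simpa [abs_mul] using abs_sin_le_abs (x := t * u)

theorem intervalIntegrable_exp_mul_mul_sin_mul_div (g t a b : ℝ) :
    IntervalIntegrable (fun u => exp (g * u) * (sin (t * u) / u)) MeasureTheory.volume a b := by
  refine ((by fun_prop : Continuous fun u => exp (g * u) * |t|).intervalIntegrable a b).mono_fun'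
    (by fun_prop) (Eventually.of_forall fun u => ?_)
  dsimp only
  rw [norm_mul, norm_of_nonneg (exp_pos _).le, norm_eq_abs]
  exact mul_le_mul_of_nonneg_left (abs_sin_mul_div_le t u) (exp_pos _).le

theorem integral_exp_mul_mul_sin_add_cos (g t a : ℝ) :
    ∫ u in (0:ℝ)..1, exp (g * u) * ((g * a - t) * sin (t * u) + (g + a * t) * cos (t * u)) =
      exp g * (a * sin t + cos t) - 1 := by
  have hderiv : ∀ u ∈ uIcc (0:ℝ) 1,
      HasDerivAt (fun u => exp (g * u) * (a * sin (t * u) + cos (t * u)))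
        (exp (g * u) * ((g * a - t) * sin (t * u) + (g + a * t) * cos (t * u))) u := by
    intro u _
    have hlin : HasDerivAt (fun u : ℝ => t * u) t u := by
      simpa using (hasDerivAt_id u).const_mul t
    have hexp : HasDerivAt (fun u : ℝ => exp (g * u)) (exp (g * u) * g) u := by
      simpa using ((hasDerivAt_id u).const_mul g).exp
    refine (hexp.mul ((hlin.sin.const_mul a).add hlin.cos)).congr_deriv ?_
    simp only [Pi.add_apply]
    ring
  rw [integral_eq_sub_of_hasDerivAt hderiv ((by fun_prop : Continuous _).intervalIntegrable _ _)]
  simp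

theorem hasDerivAt_integral_exp_mul_sin_mul_div {g g' : ℝ → ℝ} {s : Set ℝ} (hs : IsOpen s)
    (hg : ∀ x ∈ s, HasDerivAt g (g' x) x) (hg' : ContinuousOn g' s) {t : ℝ} (ht : t ∈ s) :
    HasDerivAt (fun x => ∫ u in (0:ℝ)..1, exp (g x * u) * (sin (x * u) / u))
      (∫ u in (0:ℝ)..1, exp (g t * u) * (g' t * sin (t * u) + cos (t * u))) t := by
  obtain ⟨ε, hε, hεs⟩ := Metric.nhds_basis_closedBall.mem_iff.1 (hs.mem_nhds ht)
  set K := Metric.closedBall t ε ×ˢ Icc (0:ℝ) 1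
  set F' : ℝ × ℝ → ℝ := fun p =>
    exp (g p.1 * p.2) * (g' p.1 * sin (p.1 * p.2) + cos (p.1 * p.2))
  have hF' : ContinuousOn F' K := by
    have hmaps : MapsTo Prod.fst K s := fun p hp => hεs hp.1
    have hg1 : ContinuousOn (fun p : ℝ × ℝ => g p.1) K :=
      (HasDerivAt.continuousOn hg).comp continuousOn_fst hmaps
    have hg'1 : ContinuousOn (fun p : ℝ × ℝ => g' p.1) K := hg'.comp continuousOn_fst hmaps
    have hprod : ContinuousOn (fun p : ℝ × ℝ => p.1 * p.2) K :=
      continuousOn_fst.mul continuousOn_snd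
    exact (hg1.mul continuousOn_snd).rexp.mul
      ((hg'1.mul (continuous_sin.comp_continuousOn hprod)).add
        (continuous_cos.comp_continuousOn hprod))
  obtain ⟨C, hC⟩ :=
    ((isCompact_closedBall t ε).prod isCompact_Icc).exists_bound_of_continuousOn hF'
  refine (hasDerivAt_integral_of_dominated_loc_of_deriv_le (F' := fun x u => F' (x, u))
    (bound := fun _ => C) (Metric.closedBall_mem_nhds t hε)
    (Eventually.of_forall fun x =>
      (intervalIntegrable_iff.1 (intervalIntegrable_exp_mul_mul_sin_mul_div (g x) x 0 1)).1)
    (intervalIntegrable_exp_mul_mul_sin_mul_div _ t 0 1)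
    (by simp only [F']; fun_prop) ?_ intervalIntegrable_const ?_).2
  · refine Eventually.of_forall fun u hu x hx => hC (x, u) ⟨hx, ?_⟩
    rw [uIoc_of_le zero_le_one] at hu
    exact ⟨hu.1.le, hu.2⟩
  · refine Eventually.of_forall fun u hu x hx => ?_
    have hu0 : u ≠ 0 := by
      rw [uIoc_of_le zero_le_one] at hu
      exact hu.1.ne'
    have hexp := ((hg x (hεs hx)).mul_const u).exp
    have hsin := ((hasDerivAt_mul_const u).sin (x := x)).div_const u
    refine (hexp.mul hsin).congr_deriv ?_
    simp only [F']
    field_simp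

noncomputable def nuttallPsi (t : ℝ) : ℝ :=
  ∫ u in (0:ℝ)..1, exp (t * cot t * u) * (sin (t * u) / u)

theorem nuttallPsi_nonneg {t : ℝ} (h0 : 0 ≤ t) (hπ : t ≤ π) : 0 ≤ nuttallPsi t :=
  integral_nonneg zero_le_one fun u hu => mul_nonneg (exp_pos _).le <|
    div_nonneg (sin_nonneg_of_nonneg_of_le_pi (mul_nonneg h0 hu.1) (by nlinarith [hu.1, hu.2])) hu.1

theorem nuttallPsi_le {t : ℝ} (h0 : 0 ≤ t) :
    nuttallPsi t ≤ t * ∫ u in (0:ℝ)..1, exp (t * cot t * u) := by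
  rw [← integral_const_mul]
  refine integral_mono_on zero_le_one (intervalIntegrable_exp_mul_mul_sin_mul_div _ _ _ _)
    ((by fun_prop : Continuous fun u => t * exp (t * cot t * u)).intervalIntegrable _ _)
    fun u _ => ?_
  rw [mul_comm t (exp _)]
  refine mul_le_mul_of_nonneg_left ?_ (exp_pos _).le
  exact (le_abs_self _).trans ((abs_sin_mul_div_le t u).trans_eq (abs_of_nonneg h0))

theorem hasDerivAt_add_nuttallPsi {t : ℝ} (h0 : 0 < t) (hπ : t < π) :
    HasDerivAt (fun x => x + nuttallPsi x) (sin t / t * exp (t * cot t)) t := by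
  have hsin : Ioo 0 π ⊆ {x | sin x ≠ 0} := fun x hx => (sin_pos_of_pos_of_lt_pi hx.1 hx.2).ne'
  have hg : ∀ x ∈ Ioo 0 π, HasDerivAt (fun x => x * cot x) (cot x - x * (1 + cot x ^ 2)) x :=
    fun x hx => ((hasDerivAt_id' x).mul (hasDerivAt_cot (hsin hx))).congr_deriv (by ring)
  have hg' : ContinuousOn (fun x => cot x - x * (1 + cot x ^ 2)) (Ioo 0 π) := by
    have := continuousOn_cot.mono hsin
    fun_prop
  have hΨ := hasDerivAt_integral_exp_mul_sin_mul_div isOpen_Ioo hg hg' ⟨h0, hπ⟩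
  -- `a` makes the `cos` coefficient `t cot t + a t` equal to `1`.
  set a := (1 - t * cot t) / t
  have hintegrand : ∀ u, exp (t * cot t * u) * ((cot t - t * (1 + cot t ^ 2)) * sin (t * u) +
      cos (t * u)) = exp (t * cot t * u) * ((t * cot t * a - t) * sin (t * u) +
      (t * cot t + a * t) * cos (t * u)) := fun u => by
    simp only [a]
    field_simp
    ring
  simp only [hintegrand, integral_exp_mul_mul_sin_add_cos] at hΨ
  refine ((hasDerivAt_id t).add hΨ).congr_deriv ?_
  have hs : sin t ≠ 0 := hsin ⟨h0, hπ⟩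
  simp only [a, cot_eq_cos_div_sin]
  field_simp
  ring

theorem tendsto_nuttallPsi_nhdsGT_zero : Tendsto nuttallPsi (𝓝[>] 0) (𝓝 0) := by
  have hlin : Tendsto (fun t => t * exp 1) (𝓝[>] 0) (𝓝 0) :=
    ((by fun_prop : Continuous fun t => t * exp 1).tendsto' 0 0 (zero_mul _)).mono_left
      nhdsWithin_le_nhds
  refine tendsto_of_tendsto_of_tendsto_of_le_of_le' tendsto_const_nhds hlin ?_ ?_ <;>
    filter_upwards [Ioo_mem_nhdsGT pi_pos] with t ht
  · exact nuttallPsi_nonneg ht.1.le ht.2.le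
  · exact (nuttallPsi_le ht.1.le).trans <| mul_le_mul_of_nonneg_left
      (integral_exp_mul_le_exp_one (mul_cot_le_one ht.1.le ht.2.le)) ht.1.le

theorem tendsto_nuttallPsi_nhdsLT_pi : Tendsto nuttallPsi (𝓝[<] π) (𝓝 0) := by
  have hbound :
      Tendsto (fun t => t * ∫ u in (0:ℝ)..1, exp (t * cot t * u)) (𝓝[<] π) (𝓝 0) := by
    simpa using (tendsto_id.mono_left nhdsWithin_le_nhds).mul
      (tendsto_integral_exp_mul_atBot.comp tendsto_mul_cot_nhdsLT_pi)
  refine tendsto_of_tendsto_of_tendsto_of_le_of_le' tendsto_const_nhds hbound ?_ ?_ <;>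
    filter_upwards [Ioo_mem_nhdsLT pi_pos] with t ht
  · exact nuttallPsi_nonneg ht.1.le ht.2.le
  · exact nuttallPsi_le ht.1.le

theorem intervalIntegrable_sin_div_mul_exp_mul_cot :
    IntervalIntegrable (fun t => sin t / t * exp (t * cot t)) MeasureTheory.volume 0 π := by
  have hcot : Measurable cot := by
    rw [show cot = fun x => cos x / sin x from funext cot_eq_cos_div_sin]
    fun_prop
  refine (intervalIntegrable_const (c := exp 1)).mono_fun' (by fun_prop) ?_
  rw [EventuallyLE, MeasureTheory.ae_restrict_iff' measurableSet_uIoc]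
  filter_upwards with t ht
  rw [uIoc_of_le pi_pos.le] at ht
  have hsin : 0 ≤ sin t / t := div_nonneg (sin_nonneg_of_nonneg_of_le_pi ht.1.le ht.2) ht.1.le
  rw [norm_mul, norm_of_nonneg hsin, norm_of_nonneg (exp_pos _).le, ← one_mul (exp 1)]
  exact mul_le_mul (div_le_one_of_le₀ (sin_le ht.1.le) ht.1.le)
    (exp_le_exp.2 (mul_cot_le_one ht.1.le ht.2)) (exp_pos _).le zero_le_one

theorem nuttall_bouwkamp_one :
    ∫ t in (0:ℝ)..π, (Real.sin t / t) * Real.exp (t * Real.cot t) = π := by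
  have h := integral_eq_sub_of_hasDerivAt_of_tendsto pi_pos
    (fun t ht => hasDerivAt_add_nuttallPsi ht.1 ht.2) intervalIntegrable_sin_div_mul_exp_mul_cot
    ((tendsto_id.mono_left nhdsWithin_le_nhds).add tendsto_nuttallPsi_nhdsGT_zero)
    ((tendsto_id.mono_left nhdsWithin_le_nhds).add tendsto_nuttallPsi_nhdsLT_pi)
  simpa using h
end
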